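/- arXiv:1610.03896 — 9 statements merged into one kernel-verified Lean document; each statement's English description precedes it below -/
import Mathlib

section
/- Fix an integer n ≥ 3. There exists a torsion-free subgroup G of finite index in SL(n,ℤ) such that for every non-trivial finite group F with 4(|F|+2) ≤ n there is a group chain 𝒢_F = {G_ℓ}_{ℓ≥0} in G (with G_0 = G) satisfying: (1) for every k ≥ 0, the discriminant group D^k = lim←_{ℓ≥k} G_ℓ/E_{k,ℓ} of the truncated chain {G_ℓ}_{ℓ≥k} is isomorphic to F (so the chain is stable with constant discriminant group F, and in particular is non-trivial at every level, hence the chain is irregular and not weakly normal); and (2) for every sequence (g_ℓ)_{ℓ≥0} in G satisfying the compatibility condition g_{ℓ+1}G_ℓ = g_ℓG_ℓ for all ℓ ≥ 0, the kernel of the conjugate chain, ⋂_{ℓ≥0} g_ℓ G_ℓ g_ℓ^{-1}, is the trivial subgroup. -/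
/-!
Molino theory for matchbox manifolds (Dyer–Hurder–Lukina), Theorem 1.5:
for `n ≥ 3` there is a finite-index torsion-free subgroup `G ⊆ SL(n,ℤ)` such that
for every non-trivial finite group `F` with `4(|F|+2) ≤ n` there is a group chain
`𝒢_F` in `G` whose truncated discriminant groups are all isomorphic to `F`
(so the chain is stable with constant discriminant group `F`), and every
conjugate of the chain by a compatible sequence has trivial kernel.
-/

section ChainMachinery

variable {Γ : Type*} [Group Γ]

/-- The conjugate subgroup `g K g⁻¹`. -/
def conjSub (g : Γ) (K : Subgroup Γ) : Subgroup Γ :=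
  K.map (MulAut.conj g).toMonoidHom

theorem mem_conjSub {g x : Γ} {K : Subgroup Γ} :
    x ∈ conjSub g K ↔ g⁻¹ * x * g ∈ K := by
  simp only [conjSub, Subgroup.mem_map, MulEquiv.coe_toMonoidHom, MulAut.conj_apply]
  constructor
  · rintro ⟨k, hk, rfl⟩
    have h : g⁻¹ * (g * k * g⁻¹) * g = k := by group
    rwa [h]
  · intro h
    exact ⟨g⁻¹ * x * g, h, by group⟩

/-- The core `⋂_{h ∈ H} h K h⁻¹` of `K` relative to a subgroup `H`;
for a group chain `{G_ℓ}` the subgroup `E_{n,ℓ} = coreIn (G n) (G ℓ)`. -/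
def coreIn (H K : Subgroup Γ) : Subgroup Γ :=
  ⨅ h : H, conjSub (h : Γ) K

theorem mem_coreIn {H K : Subgroup Γ} {x : Γ} :
    x ∈ coreIn H K ↔ ∀ h ∈ H, h⁻¹ * x * h ∈ K := by
  simp only [coreIn, Subgroup.mem_iInf, mem_conjSub, Subtype.forall]

theorem coreIn_mono {H K K' : Subgroup Γ} (h : K ≤ K') :
    coreIn H K ≤ coreIn H K' := fun x hx =>
  mem_coreIn.mpr fun g hg => h (mem_coreIn.mp hx g hg)

instance coreIn_subgroupOf_normal (H K : Subgroup Γ) :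
    ((coreIn H K).subgroupOf H).Normal := by
  constructor
  intro x hx g
  rw [Subgroup.mem_subgroupOf] at hx ⊢
  rw [mem_coreIn] at hx ⊢
  intro h hh
  have key := hx ((g : Γ)⁻¹ * h) (H.mul_mem (H.inv_mem g.2) hh)
  have e : ((g : Γ)⁻¹ * h)⁻¹ * (x : Γ) * ((g : Γ)⁻¹ * h)
      = h⁻¹ * ((g : Γ) * (x : Γ) * (g : Γ)⁻¹) * h := by group
  rw [e] at key
  simpa using key

/-- The quotient `G_n / E_{n,ℓ}` where `E_{n,ℓ}` is the core of `G_ℓ` in `G_n`. -/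
abbrev Qgrp (G : ℕ → Subgroup Γ) (n ℓ : ℕ) :=
  ↥(G n) ⧸ (coreIn (G n) (G ℓ)).subgroupOf (G n)

/-- The image of `G_ℓ` in the quotient `G_n / E_{n,ℓ}`. -/
def imgSub (G : ℕ → Subgroup Γ) (n ℓ : ℕ) : Subgroup (Qgrp G n ℓ) :=
  Subgroup.map (QuotientGroup.mk' _) ((G ℓ).subgroupOf (G n))

/-- The bonding homomorphism `G_n/E_{n,ℓ+1} → G_n/E_{n,ℓ}`. -/
def bond (G : ℕ → Subgroup Γ) (hG : ∀ ℓ, G (ℓ + 1) ≤ G ℓ) (n ℓ : ℕ) :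
    Qgrp G n (ℓ + 1) →* Qgrp G n ℓ :=
  QuotientGroup.map _ _ (MonoidHom.id _) (by
    intro x hx
    rw [Subgroup.mem_comap]
    rw [Subgroup.mem_subgroupOf] at hx ⊢
    exact coreIn_mono (hG ℓ) hx)

/-- The discriminant group of the truncated group chain `{G_ℓ}_{ℓ ≥ n}`:
the inverse limit `lim←_{ℓ ≥ n} G_ℓ/E_{n,ℓ}`, realized as the subgroup of the product
`Π_ℓ G_n/E_{n,n+ℓ}` consisting of bonding-compatible sequences of cosets of
elements of `G_{n+ℓ}`. -/
def Disc (G : ℕ → Subgroup Γ) (hG : ∀ ℓ, G (ℓ + 1) ≤ G ℓ) (n : ℕ) :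
    Subgroup (∀ ℓ : ℕ, Qgrp G n (n + ℓ)) where
  carrier := { x | (∀ ℓ, x ℓ ∈ imgSub G n (n + ℓ)) ∧
    ∀ ℓ, bond G hG n (n + ℓ) (x (ℓ + 1)) = x ℓ }
  one_mem' := ⟨fun ℓ => (imgSub G n (n + ℓ)).one_mem,
    fun ℓ => by simpa using map_one (bond G hG n (n + ℓ))⟩
  mul_mem' := by
    intro x y hx hy
    obtain ⟨hx1, hx2⟩ := hx
    obtain ⟨hy1, hy2⟩ := hy
    refine ⟨fun ℓ => (imgSub G n (n + ℓ)).mul_mem (hx1 ℓ) (hy1 ℓ), fun ℓ => ?_⟩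
    simp only [Pi.mul_apply, map_mul]
    rw [hx2 ℓ, hy2 ℓ]
  inv_mem' := by
    intro x hx
    obtain ⟨hx1, hx2⟩ := hx
    refine ⟨fun ℓ => (imgSub G n (n + ℓ)).inv_mem (hx1 ℓ), fun ℓ => ?_⟩
    simp only [Pi.inv_apply, map_inv]
    rw [hx2 ℓ]

end ChainMachinery

/-- A monoid is torsion-free if no element other than `1` has finite order
(the definition `Monoid.IsTorsionFree` of the older Mathlib, since removed). -/
def Monoid.IsTorsionFree (G : Type*) [Monoid G] : Prop :=
  ∀ g : G, g ≠ 1 → ¬IsOfFinOrder g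

/-!
Take `G = Γ(3)`. It is torsion-free by Minkowski's argument: if `y = 1 + 3^(k+1) C` has prime
order `p`, expanding `y^p = 1` gives `3 ∣ C`, so every power of `3` divides `y - 1`.

Embed `F` in `SL(n, ℤ)` by permutation matrices `ρ(f)` and let
`G_ℓ = {g ∈ Γ(3) : g mod 2^ℓ ∈ ρ(F)}`. Since `3` is a unit modulo `2^ℓ`, every elementary matrix
modulo `2^ℓ` lifts to `Γ(3)`, and so does every `ρ(f)`: the permutation matrix of a double
transposition is a product of rotations, each a product of three elementary matrices. For
`ℓ ≥ k + 2` the core of `G_ℓ` in `G_k` is `Γ(3) ∩ Γ(2^ℓ)`. Indeed, let `x ≡ ρ(f)` lie in the core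
and let `σ` be the permutation of `ρ(f)`. The elementary matrix `h = 1 + 3·2^(k+1) E_{a,σa}` lies
in `G_k`, so `h⁻¹ x h ≡ ρ(f')`; modulo `2` this gives `f' = f`, and then modulo `2^(k+2)` the
`(a, a)` entry of `ρ(f) h = h ρ(f)` reads `0 = 3·2^(k+1)` unless `σ a = a`, that is, `f = 1`.
Hence the discriminant groups are all `F`.

If `x` is conjugate into every `G_ℓ`, then `x^|F| ≡ 1` modulo every `2^ℓ`, so `x^|F| = 1`, and
`x ∈ Γ(3)` gives `x = 1`.
-/

open Matrix Equiv

section Discriminant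

variable {Γ : Type*} [Group Γ] {G : ℕ → Subgroup Γ} {hG : ∀ ℓ, G (ℓ + 1) ≤ G ℓ} {k : ℕ}

theorem Disc.apply_eq_of_apply_eq {x y : Disc G hG k} {m ℓ : ℕ} (hℓ : ℓ ≤ m)
    (h : x.1 m = y.1 m) : x.1 ℓ = y.1 ℓ :=
  Nat.decreasingInduction (fun j _ ih => by rw [← x.2.2 j, ← y.2.2 j, ih]) h hℓ

theorem Disc.bijective_of_injective_apply {F : Type*} (ψ : F → Disc G hG k) (m : ℕ)
    (hinj : Function.Injective fun f => (ψ f).1 m)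
    (hsurj : ∀ (x : Disc G hG k) ℓ, ∃ f, (ψ f).1 ℓ = x.1 ℓ) : Function.Bijective ψ := by
  refine ⟨fun f f' h => hinj (congrArg (fun x : Disc G hG k => x.1 m) h), fun x => ?_⟩
  choose φ hφ using hsurj x
  have hφ_const (ℓ : ℕ) : φ (max ℓ m) = φ m :=
    hinj ((Disc.apply_eq_of_apply_eq (le_max_right ℓ m) (hφ _)).trans (hφ m).symm)
  refine ⟨φ m, Subtype.ext (funext fun ℓ => ?_)⟩
  rw [← hφ_const ℓ]
  exact Disc.apply_eq_of_apply_eq (le_max_left ℓ m) (hφ _)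

end Discriminant

section Minkowski

theorem Int.eq_zero_of_forall_pow_dvd {b c : ℤ} (hb : b.natAbs ≠ 1) (h : ∀ k : ℕ, b ^ k ∣ c) :
    c = 0 := by
  by_contra hc
  obtain ⟨k, hk⟩ := Int.finiteMultiplicity_iff.2 ⟨hb, hc⟩
  exact hk (h (k + 1))

theorem sq_dvd_one_add_pow_sub_one_sub_mul {R : Type*} [CommRing R] (M : R) (p : ℕ) :
    M ^ 2 ∣ (1 + M) ^ p - 1 - p * M := by
  induction p with
  | zero => simp
  | succ p ih =>
    obtain ⟨D, hD⟩ := ih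
    exact ⟨D + D * M + p, by rw [pow_succ]; push_cast; linear_combination (1 + M) * hD⟩

theorem three_dvd_of_one_add_pow_eq_one {R : Type*} [CommRing R] [IsAddTorsionFree R] {C : R}
    {k p : ℕ} (hp : p.Prime) (h : (1 + 3 ^ (k + 1) * C) ^ p = 1) : 3 ∣ C := by
  have cancel {j : ℕ} {x : R} (hx : 3 ^ j * x = 0) : x = 0 :=
    nsmul_right_injective (pow_ne_zero j three_ne_zero) (by simpa [nsmul_eq_mul] using hx)
  by_cases hp3 : p = 3
  · subst hp3
    have h3 := cancel (j := k + 2) (x := C + 3 ^ (k + 1) * C ^ 2 + 3 ^ (2 * k + 1) * C ^ 3)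
      (by linear_combination h)
    exact ⟨-(3 ^ k * C ^ 2 + 3 ^ (2 * k) * C ^ 3), by linear_combination h3⟩
  · obtain ⟨D, hD⟩ := sq_dvd_one_add_pow_sub_one_sub_mul (3 ^ (k + 1) * C) p
    have hpC := cancel (j := k + 1) (x := p * C + 3 ^ (k + 1) * C ^ 2 * D)
      (by linear_combination h - hD)
    have hcop : IsCoprime (3 : R) p := by
      simpa using ((Nat.isCoprime_iff_coprime.mpr
        ((Nat.coprime_primes Nat.prime_three hp).mpr (Ne.symm hp3))).map (Int.castRingHom R))
    exact hcop.dvd_of_dvd_mul_left ⟨-(3 ^ k * C ^ 2 * D), by linear_combination hpC⟩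

open scoped IsMulCommutative in
theorem exists_eq_three_mul_of_one_add_pow_eq_one {A : Type*} [Ring A] [IsAddTorsionFree A]
    {C : A} {k p : ℕ} (hp : p.Prime) (h : (1 + 3 ^ (k + 1) * C) ^ p = 1) : ∃ D, C = 3 * D := by
  let S := Subring.closure ({C} : Set A)
  have : IsMulCommutative S := Subring.isMulCommutative_closure (by simp)
  have : IsAddTorsionFree S :=
    Function.Injective.isAddTorsionFree S.subtype.toAddMonoidHom Subtype.val_injective
  obtain ⟨D, hD⟩ := three_dvd_of_one_add_pow_eq_one (C := (⟨C, Subring.subset_closure rfl⟩ : S)) hp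
    (Subtype.ext (by push_cast; exact h))
  exact ⟨D, congrArg Subtype.val hD⟩

end Minkowski

instance {m n α : Type*} [AddMonoid α] [IsAddTorsionFree α] : IsAddTorsionFree (Matrix m n α) :=
  inferInstanceAs (IsAddTorsionFree (m → n → α))

theorem Equiv.Perm.viaEmbedding_swap {α β : Type*} [DecidableEq α] [DecidableEq β] (e : α ↪ β)
    (x y : α) : (swap x y).viaEmbedding e = swap (e x) (e y) := by
  ext z
  by_cases hz : z ∈ Set.range e
  · obtain ⟨z, rfl⟩ := hz
    rw [viaEmbedding_apply, e.injective.swap_apply]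
  · rw [viaEmbedding_apply_of_notMem _ _ _ hz, swap_apply_of_ne_of_ne
      (fun h => hz ⟨x, h.symm⟩) (fun h => hz ⟨y, h.symm⟩)]

namespace StableChain

section CongruenceSubgroup

variable {ι : Type*} [Fintype ι] [DecidableEq ι]

variable (ι) in
def reduceMod (m : ℕ) : Matrix.SpecialLinearGroup ι ℤ →* Matrix.SpecialLinearGroup ι (ZMod m) :=
  Matrix.SpecialLinearGroup.map (Int.castRingHom (ZMod m))

variable (ι) in
def Gamma (m : ℕ) : Subgroup (Matrix.SpecialLinearGroup ι ℤ) := (reduceMod ι m).ker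

theorem reduceMod_eq_one_iff_dvd {m : ℕ} {y : Matrix.SpecialLinearGroup ι ℤ} :
    reduceMod ι m y = 1 ↔ ∀ i j, (m : ℤ) ∣ ((y : Matrix ι ι ℤ) - 1) i j := by
  refine (Matrix.SpecialLinearGroup.ext_iff _ _).trans (forall₂_congr fun i j => ?_)
  rw [← ZMod.intCast_zmod_eq_zero_iff_dvd, Matrix.sub_apply, Int.cast_sub, sub_eq_zero]
  by_cases hij : i = j <;> simp [reduceMod, one_apply, hij]

theorem reduceMod_eq_one_iff {m : ℕ} {y : Matrix.SpecialLinearGroup ι ℤ} :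
    reduceMod ι m y = 1 ↔ ∃ C : Matrix ι ι ℤ, (y : Matrix ι ι ℤ) = 1 + (m : Matrix ι ι ℤ) * C := by
  simp only [reduceMod_eq_one_iff_dvd, ← nsmul_eq_mul, ← sub_eq_iff_eq_add']
  constructor
  · intro h
    exact ⟨of fun i j => ((y : Matrix ι ι ℤ) - 1) i j / m,
      ext fun i j => (Int.mul_ediv_cancel' (h i j)).symm⟩
  · rintro ⟨C, hC⟩ i j
    rw [hC, Matrix.smul_apply]
    exact Dvd.intro _ (nsmul_eq_mul _ _).symm

theorem eq_one_of_forall_reduceMod_pow_eq_one {b : ℕ} (hb : 2 ≤ b)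
    {y : Matrix.SpecialLinearGroup ι ℤ} (h : ∀ k, reduceMod ι (b ^ k) y = 1) : y = 1 := by
  ext i j
  have := Int.eq_zero_of_forall_pow_dvd (b := b) (by omega) fun k => by
    simpa using reduceMod_eq_one_iff_dvd.mp (h k) i j
  simpa [sub_eq_zero] using this

theorem eq_one_of_mem_gamma_three_of_pow_eq_one {y : Matrix.SpecialLinearGroup ι ℤ}
    (hy : y ∈ Gamma ι 3) {p : ℕ} (hp : p.Prime) (h : y ^ p = 1) : y = 1 := by
  have h3pow (k : ℕ) : ∃ C : Matrix ι ι ℤ, (y : Matrix ι ι ℤ) = 1 + 3 ^ k * C := by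
    induction k with
    | zero => exact ⟨y - 1, by simp⟩
    | succ k ih =>
      rcases k with _ | k
      · simpa using reduceMod_eq_one_iff.mp hy
      obtain ⟨C, hC⟩ := ih
      obtain ⟨D, rfl⟩ := exists_eq_three_mul_of_one_add_pow_eq_one hp
        (by rw [← hC, ← Matrix.SpecialLinearGroup.coe_pow, h]; rfl)
      exact ⟨D, by rw [hC, ← mul_assoc, ← pow_succ]⟩
  refine eq_one_of_forall_reduceMod_pow_eq_one (by norm_num : 2 ≤ 3) fun k => ?_
  obtain ⟨C, hC⟩ := h3pow k
  exact reduceMod_eq_one_iff.mpr ⟨C, by simpa using hC⟩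

theorem gamma_three_isTorsionFree : Monoid.IsTorsionFree (Gamma ι 3) := by
  intro g hg hfin
  obtain ⟨p, hp, hpg⟩ := Nat.exists_prime_and_dvd (mt orderOf_eq_one_iff.mp hg)
  set y := g ^ (orderOf g / p)
  have hord : orderOf y = p := orderOf_pow_orderOf_div hfin.orderOf_pos.ne' hpg
  have hy : y = 1 := Subtype.ext <| eq_one_of_mem_gamma_three_of_pow_eq_one y.2 hp <| by
    rw [← Subgroup.coe_pow, ← hord, pow_orderOf_eq_one, Subgroup.coe_one]
  exact hp.one_lt.ne' (hord.symm.trans (orderOf_eq_one_iff.mpr hy))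

end CongruenceSubgroup

section PermutationRepresentation

variable {α β : Type*} [Fintype β] [DecidableEq β]

theorem sign_viaEmbedding_sumCongr (e : α ⊕ α ↪ β) (π : Perm α) :
    Perm.sign (Perm.viaEmbedding (Perm.sumCongr π π) e) = 1 := by
  classical
  have : Fintype α := Fintype.ofInjective (e ∘ Sum.inl) (e.injective.comp Sum.inl_injective)
  unfold Perm.viaEmbedding
  rw [Perm.sign_extendDomain, Perm.sign_sumCongr, Int.units_mul_self]

noncomputable def doublePerm (e : α ⊕ α ↪ β) : Perm α →* alternatingGroup β :=
  ((Perm.viaEmbeddingHom e).comp ((Perm.sumCongrHom α α).comp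
    ((MonoidHom.id _).prod (MonoidHom.id _)))).codRestrict _
    fun π => Perm.mem_alternatingGroup.mpr (sign_viaEmbedding_sumCongr e π)

theorem doublePerm_apply_inl (e : α ⊕ α ↪ β) (π : Perm α) (x : α) :
    (doublePerm e π : Perm β) (e (.inl x)) = e (.inl (π x)) :=
  Perm.viaEmbedding_apply _ _ _

theorem doublePerm_swap [DecidableEq α] (e : α ⊕ α ↪ β) (x y : α) :
    (doublePerm e (swap x y) : Perm β) =
      swap (e (.inl x)) (e (.inl y)) * swap (e (.inr x)) (e (.inr y)) := by
  have hsum : sumCongr (swap x y) (swap x y) =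
      swap (Sum.inl x) (Sum.inl y) * swap (.inr x) (.inr y) := by
    rw [← Perm.sumCongr_swap_refl, ← Perm.sumCongr_refl_swap, Perm.sumCongr_mul]
    rfl
  change (Perm.viaEmbeddingHom e) (sumCongr (swap x y) (swap x y)) = _
  rw [hsum, map_mul, Perm.viaEmbeddingHom_apply, Perm.viaEmbeddingHom_apply, Perm.viaEmbedding_swap,
    Perm.viaEmbedding_swap]

variable (R : Type*) [CommRing R]

noncomputable def permSL : alternatingGroup β →* Matrix.SpecialLinearGroup β R where
  toFun σ := ⟨permMatrixHom (σ : Perm β), by simp [Perm.mem_alternatingGroup.mp σ.2]⟩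
  map_one' := Subtype.ext (map_one permMatrixHom)
  map_mul' σ τ := Subtype.ext (map_mul permMatrixHom (σ : Perm β) τ)

/-- The left regular representation of `F`, taken twice so that it lands in `SL`. -/
noncomputable def regularRep {F : Type*} [Group F] (e : F ⊕ F ↪ β) :
    F →* Matrix.SpecialLinearGroup β R :=
  (permSL R).comp ((doublePerm e).comp (MulAction.toPermHom F F))

variable {R}

theorem map_regularRep {S : Type*} [CommRing S] (φ : R →+* S) {F : Type*} [Group F]
    (e : F ⊕ F ↪ β) (f : F) :
    Matrix.SpecialLinearGroup.map φ (regularRep R e f) = regularRep S e f :=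
  Subtype.ext (PEquiv.map_toMatrix φ _)

theorem permMatrixHom_apply_apply (σ : Perm β) (a : β) :
    (permMatrixHom σ : Matrix β β R) (σ a) a = 1 := by
  simp [PEquiv.toMatrix_apply]

theorem permMatrixHom_injective [Nontrivial R] :
    Function.Injective (permMatrixHom : Perm β →* Matrix β β R) := by
  intro σ τ h
  ext j
  have := congrFun (congrFun h (σ j)) j
  rw [permMatrixHom_apply_apply] at this
  simp only [permMatrixHom_apply, PEquiv.toMatrix_apply, toPEquiv_apply, Option.mem_def,
    Option.some.injEq, Perm.inv_def] at this
  split_ifs at this with hj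
  · exact (symm_apply_eq τ).mp hj
  · exact absurd this one_ne_zero

theorem regularRep_injective [Nontrivial R] {F : Type*} [Group F] (e : F ⊕ F ↪ β) :
    Function.Injective (regularRep R e) := by
  intro f f' h
  have := DFunLike.congr_fun (permMatrixHom_injective (congrArg Subtype.val h)) (e (.inl 1))
  simpa [doublePerm_apply_inl] using this

theorem eq_zero_of_commute_transvection {σ : Perm β} {a : β} (ha : a ≠ σ a) {w : R}
    (h : Commute (permMatrixHom σ : Matrix β β R) (transvection a (σ a) w)) : w = 0 := by
  have := congrFun (congrFun h.eq a) a
  rw [mul_transvection_apply_of_ne (hb := ha), transvection_mul_apply_same,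
    permMatrixHom_apply_apply, mul_one] at this
  simpa using this

end PermutationRepresentation

section Lift

variable {ι : Type*} [Fintype ι] [DecidableEq ι] {R S : Type*} [CommRing R] [CommRing S]
  {a b c d : ι}

def transvectionSL (hab : a ≠ b) (t : R) : Matrix.SpecialLinearGroup ι R :=
  ⟨transvection a b t, det_transvection_of_ne a b hab t⟩

@[simp]
theorem coe_transvectionSL (hab : a ≠ b) (t : R) :
    (transvectionSL hab t : Matrix ι ι R) = transvection a b t :=
  rfl

theorem transvectionSL_zero (hab : a ≠ b) : transvectionSL hab (0 : R) = 1 :=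
  Subtype.ext (transvection_zero a b)

theorem map_transvectionSL (φ : R →+* S) (hab : a ≠ b) (t : R) :
    Matrix.SpecialLinearGroup.map φ (transvectionSL hab t) = transvectionSL hab (φ t) :=
  Matrix.SpecialLinearGroup.ext _ _ fun i j => by
    by_cases hij : i = j <;> simp [transvection, one_apply, single_apply, hij, apply_ite φ]

def rotationSL (hab : a ≠ b) : Matrix.SpecialLinearGroup ι R :=
  transvectionSL hab.symm 1 * transvectionSL hab (-1) * transvectionSL hab.symm 1

theorem coe_rotationSL (hab : a ≠ b) :
    (rotationSL (R := R) hab : Matrix ι ι R) =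
      1 - single a a 1 - single b b 1 + single b a 1 - single a b 1 := by
  simp only [rotationSL, Matrix.SpecialLinearGroup.coe_mul, coe_transvectionSL, transvection,
    ← single_neg, mul_add, add_mul, mul_one, one_mul, mul_neg, neg_mul, single_mul_single_same,
    single_mul_single_of_ne, ne_eq, hab, not_false_eq_true, add_zero]
  abel

theorem permMatrixHom_swap (hab : a ≠ b) :
    (permMatrixHom (swap a b) : Matrix ι ι R) =
      1 - single a a 1 - single b b 1 + single a b 1 + single b a 1 := by
  have hba := hab.symm
  ext i j
  simp only [permMatrixHom_apply, swap_inv, PEquiv.toMatrix_apply, toPEquiv_apply, Option.mem_def,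
    Option.some.injEq, Matrix.sub_apply, Matrix.add_apply, one_apply, single, of_apply]
  by_cases hia : i = a <;> by_cases hib : i = b <;> by_cases hja : j = a <;>
    by_cases hjb : j = b <;> simp_all [swap_apply_def, eq_comm]

theorem coe_rotationSL_mul_rotationSL_mul_rotationSL_sq (hab : a ≠ b) (hcd : c ≠ d) (hac : a ≠ c)
    (had : a ≠ d) (hbc : b ≠ c) (hbd : b ≠ d) :
    ((rotationSL hab * rotationSL hcd * rotationSL hbd ^ 2 : Matrix.SpecialLinearGroup ι R) :
      Matrix ι ι R) = permMatrixHom (swap a b * swap c d) := by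
  have hsq : (1 - single b b (1 : R) - single d d 1 + single d b 1 - single b d 1) ^ 2 =
      1 - single b b 1 - single b b 1 - single d d 1 - single d d 1 := by
    simp only [sq, mul_add, add_mul, mul_sub, sub_mul, mul_one, one_mul, single_mul_single_same,
      single_mul_single_of_ne, ne_eq, hbd, Ne.symm hbd, not_false_eq_true]
    abel
  rw [map_mul, permMatrixHom_swap hab, permMatrixHom_swap hcd, Matrix.SpecialLinearGroup.coe_mul,
    Matrix.SpecialLinearGroup.coe_mul, Matrix.SpecialLinearGroup.coe_pow, coe_rotationSL,
    coe_rotationSL, coe_rotationSL, hsq]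
  simp only [mul_add, add_mul, mul_sub, sub_mul, mul_one, one_mul, zero_mul,
    single_mul_single_same, single_mul_single_of_ne, ne_eq, hab, hcd, hac, had, hbc, Ne.symm hbc,
    hbd, Ne.symm hbd, not_false_eq_true]
  abel

theorem exists_intCast_eq_and_intCast_eq_zero {m q : ℕ} (h : m.Coprime q) (c : ZMod q) :
    ∃ t : ℤ, (t : ZMod q) = c ∧ (t : ZMod m) = 0 :=
  ⟨m * ZMod.cast ((m : ZMod q)⁻¹ * c), by
    rw [Int.cast_mul, ZMod.intCast_zmod_cast, Int.cast_natCast, ← mul_assoc,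
      ZMod.coe_mul_inv_eq_one m h, one_mul], by simp⟩

variable {m q : ℕ}

theorem transvectionSL_mem_map_gamma (hmq : m.Coprime q) (hab : a ≠ b) (c : ZMod q) :
    transvectionSL hab c ∈ (Gamma ι m).map (reduceMod ι q) := by
  obtain ⟨t, htq, htm⟩ := exists_intCast_eq_and_intCast_eq_zero hmq c
  refine Subgroup.mem_map.mpr ⟨transvectionSL hab t, ?_, ?_⟩
  · rw [Gamma, MonoidHom.mem_ker, reduceMod, map_transvectionSL, eq_intCast, htm,
      transvectionSL_zero]
  · rw [reduceMod, map_transvectionSL, eq_intCast, htq]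

theorem rotationSL_mem_map_gamma (hmq : m.Coprime q) (hab : a ≠ b) :
    rotationSL hab ∈ (Gamma ι m).map (reduceMod ι q) :=
  mul_mem (mul_mem (transvectionSL_mem_map_gamma hmq _ _) (transvectionSL_mem_map_gamma hmq _ _))
    (transvectionSL_mem_map_gamma hmq _ _)

theorem permSL_doublePerm_swap_mem_map_gamma {α : Type*} [DecidableEq α] (hmq : m.Coprime q)
    (e : α ⊕ α ↪ ι) {x y : α} (hxy : x ≠ y) :
    permSL (ZMod q) (doublePerm e (swap x y)) ∈ (Gamma ι m).map (reduceMod ι q) := by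
  have hab : e (.inl x) ≠ e (.inl y) := by simpa using hxy
  have hcd : e (.inr x) ≠ e (.inr y) := by simpa using hxy
  have hne {z w : α} : e (.inl z) ≠ e (.inr w) := by simp
  have hperm : permSL (ZMod q) (doublePerm e (swap x y)) =
      rotationSL hab * rotationSL hcd * rotationSL (hne (w := y)) ^ 2 :=
    Subtype.ext <| by
      rw [coe_rotationSL_mul_rotationSL_mul_rotationSL_sq hab hcd hne hne hne hne,
        ← doublePerm_swap]
      rfl
  rw [hperm]
  exact mul_mem (mul_mem (rotationSL_mem_map_gamma hmq hab) (rotationSL_mem_map_gamma hmq hcd))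
    (pow_mem (rotationSL_mem_map_gamma hmq _) 2)

theorem regularRep_mem_map_gamma {F : Type*} [Group F] [DecidableEq F] [Finite F]
    (hmq : m.Coprime q) (e : F ⊕ F ↪ ι) (f : F) :
    regularRep (ZMod q) e f ∈ (Gamma ι m).map (reduceMod ι q) := by
  have hswap : Subgroup.closure {σ : Perm F | σ.IsSwap} ≤
      ((Gamma ι m).map (reduceMod ι q)).comap ((permSL (ZMod q)).comp (doublePerm e)) := by
    rw [Subgroup.closure_le]
    rintro σ ⟨x, y, hxy, rfl⟩
    exact permSL_doublePerm_swap_mem_map_gamma hmq e hxy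
  rw [Perm.closure_isSwap] at hswap
  exact hswap (Subgroup.mem_top (MulAction.toPerm f))

end Lift

section Chain

variable {ι : Type*} [Fintype ι] [DecidableEq ι]

theorem map_castHom_reduceMod {a b : ℕ} (h : a ∣ b) (g : Matrix.SpecialLinearGroup ι ℤ) :
    Matrix.SpecialLinearGroup.map (ZMod.castHom h (ZMod a)) (reduceMod ι b g) = reduceMod ι a g :=
  Matrix.SpecialLinearGroup.ext _ _ fun i j => by simp [reduceMod]

theorem reduceMod_transvectionSL_eq_one {m t : ℕ} (hmt : m ∣ t) {a b : ι} (hab : a ≠ b) :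
    reduceMod ι m (transvectionSL hab (t : ℤ)) = 1 := by
  rw [reduceMod, map_transvectionSL, eq_intCast, Int.cast_natCast,
    (ZMod.natCast_eq_zero_iff t m).mpr hmt, transvectionSL_zero]

variable {F : Type*} [Group F] (e : F ⊕ F ↪ ι)

noncomputable def chain (ℓ : ℕ) : Subgroup (Matrix.SpecialLinearGroup ι ℤ) :=
  Gamma ι 3 ⊓ (regularRep (ZMod (2 ^ ℓ)) e).range.comap (reduceMod ι (2 ^ ℓ))

variable {e}

theorem mem_chain {ℓ : ℕ} {g : Matrix.SpecialLinearGroup ι ℤ} :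
    g ∈ chain e ℓ ↔ g ∈ Gamma ι 3 ∧ ∃ f, regularRep (ZMod (2 ^ ℓ)) e f = reduceMod ι (2 ^ ℓ) g :=
  Iff.rfl

theorem chain_le_gamma (ℓ : ℕ) : chain e ℓ ≤ Gamma ι 3 := inf_le_left

theorem mem_chain_of_reduceMod_eq_one {ℓ : ℕ} {g : Matrix.SpecialLinearGroup ι ℤ}
    (hg : g ∈ Gamma ι 3) (h : reduceMod ι (2 ^ ℓ) g = 1) : g ∈ chain e ℓ :=
  ⟨hg, 1, by rw [map_one, h]⟩

theorem regularRep_eq_reduceMod_of_le {a b : ℕ} (hab : a ≤ b) {g : Matrix.SpecialLinearGroup ι ℤ}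
    {f : F} (h : regularRep (ZMod (2 ^ b)) e f = reduceMod ι (2 ^ b) g) :
    regularRep (ZMod (2 ^ a)) e f = reduceMod ι (2 ^ a) g := by
  have hdvd : 2 ^ a ∣ 2 ^ b := pow_dvd_pow 2 hab
  rw [← map_castHom_reduceMod hdvd, ← h, map_regularRep]

theorem chain_antitone {a b : ℕ} (hab : a ≤ b) : chain e b ≤ chain e a :=
  fun _ ⟨hg, f, hf⟩ => ⟨hg, f, regularRep_eq_reduceMod_of_le hab hf⟩

theorem chain_succ_le (ℓ : ℕ) : chain e (ℓ + 1) ≤ chain e ℓ :=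
  chain_antitone (Nat.le_succ ℓ)

theorem chain_zero : chain e 0 = Gamma ι 3 := by
  have : Subsingleton (ZMod (2 ^ 0)) := inferInstanceAs (Subsingleton (ZMod 1))
  exact le_antisymm (chain_le_gamma 0) fun g hg =>
    ⟨hg, 1, Subtype.ext (Matrix.ext fun _ _ => Subsingleton.elim _ _)⟩

theorem chain_finiteIndex (ℓ : ℕ) : ((chain e ℓ).subgroupOf (Gamma ι 3)).FiniteIndex := by
  have : NeZero (2 ^ ℓ) := ⟨by positivity⟩
  have : (Gamma ι (2 ^ ℓ)).FiniteIndex := Subgroup.finiteIndex_ker _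
  exact Subgroup.finiteIndex_of_le fun g hg =>
    mem_chain_of_reduceMod_eq_one g.2 (MonoidHom.mem_ker.mp (Subgroup.mem_subgroupOf.mp hg))

theorem mem_coreIn_of_reduceMod_eq_one {k L : ℕ} {x : Matrix.SpecialLinearGroup ι ℤ}
    (hx : x ∈ Gamma ι 3) (h : reduceMod ι (2 ^ L) x = 1) : x ∈ coreIn (chain e k) (chain e L) :=
  mem_coreIn.mpr fun g hg => by
    have hg3 := chain_le_gamma k hg
    refine mem_chain_of_reduceMod_eq_one
      (mul_mem (mul_mem (inv_mem hg3) hx) hg3) ?_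
    rw [map_mul, map_mul, map_inv, h, mul_one, inv_mul_cancel]

theorem reduceMod_eq_one_of_mem_coreIn {k L : ℕ} (hL : k + 2 ≤ L)
    {x : Matrix.SpecialLinearGroup ι ℤ} (hx : x ∈ coreIn (chain e k) (chain e L)) :
    reduceMod ι (2 ^ L) x = 1 := by
  rw [mem_coreIn] at hx
  obtain ⟨-, f, hf⟩ := mem_chain.mp (by simpa using hx 1 (one_mem _))
  suffices f = 1 by rw [← hf, this, map_one]
  by_contra hf1
  set σ : Perm ι := (doublePerm e (MulAction.toPerm f) : Perm ι)
  have ha : e (.inl 1) ≠ σ (e (.inl 1)) := by simpa [σ, doublePerm_apply_inl] using Ne.symm hf1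
  have hc (j : ℕ) (hj : j ≤ k + 1) : 2 ^ j ∣ 3 * 2 ^ (k + 1) :=
    Dvd.dvd.mul_left (pow_dvd_pow 2 hj) 3
  -- `h` is trivial modulo `3` and `2 ^ (k + 1)`, but not modulo `2 ^ (k + 2)`
  set h := transvectionSL ha ((3 * 2 ^ (k + 1) : ℕ) : ℤ)
  obtain ⟨-, f', hf'⟩ := mem_chain.mp <| hx h <| mem_chain_of_reduceMod_eq_one
    (reduceMod_transvectionSL_eq_one (dvd_mul_right 3 _) ha)
    (reduceMod_transvectionSL_eq_one (hc k (by omega)) ha)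
  have hconj (j : ℕ) (hj : j ≤ L) : regularRep (ZMod (2 ^ j)) e f' =
      (reduceMod ι (2 ^ j) h)⁻¹ * regularRep (ZMod (2 ^ j)) e f * reduceMod ι (2 ^ j) h := by
    rw [regularRep_eq_reduceMod_of_le hj hf', regularRep_eq_reduceMod_of_le hj hf, map_mul,
      map_mul, map_inv]
  have hf' : f' = f := by
    have : Fact (1 < 2 ^ 1) := ⟨by norm_num⟩
    refine regularRep_injective (R := ZMod (2 ^ 1)) e ?_
    rw [hconj 1 (by omega), reduceMod_transvectionSL_eq_one (hc 1 (by omega)) ha]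
    simp
  have hcomm : Commute (regularRep (ZMod (2 ^ (k + 2))) e f) (reduceMod ι (2 ^ (k + 2)) h) := by
    have := hconj (k + 2) hL
    rwa [hf', mul_assoc, eq_comm, inv_mul_eq_iff_eq_mul] at this
  have hw : ((3 * 2 ^ (k + 1) : ℕ) : ZMod (2 ^ (k + 2))) = 0 := by
    refine eq_zero_of_commute_transvection ha ?_
    have := congrArg Subtype.val hcomm.eq
    rwa [Matrix.SpecialLinearGroup.coe_mul, Matrix.SpecialLinearGroup.coe_mul, reduceMod,
      map_transvectionSL, eq_intCast, Int.cast_natCast, coe_transvectionSL] at this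
  rw [ZMod.natCast_eq_zero_iff, pow_succ, mul_comm 3, Nat.mul_dvd_mul_iff_left (by positivity)]
    at hw
  exact absurd hw (by norm_num)

end Chain

section ChainDiscriminant

variable {ι : Type*} [Fintype ι] [DecidableEq ι] {F : Type*} [Group F] [DecidableEq F] [Finite F]
  (e : F ⊕ F ↪ ι)

theorem exists_mem_gamma_three_reduceMod_eq (L : ℕ) (f : F) :
    ∃ γ ∈ Gamma ι 3, reduceMod ι (2 ^ L) γ = regularRep (ZMod (2 ^ L)) e f :=
  regularRep_mem_map_gamma (Nat.Coprime.pow_right L (by norm_num)) e f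

noncomputable def liftRep (L : ℕ) (f : F) : Matrix.SpecialLinearGroup ι ℤ :=
  (exists_mem_gamma_three_reduceMod_eq e L f).choose

theorem liftRep_mem_gamma (L : ℕ) (f : F) : liftRep e L f ∈ Gamma ι 3 :=
  (exists_mem_gamma_three_reduceMod_eq e L f).choose_spec.1

theorem reduceMod_liftRep (L : ℕ) (f : F) :
    reduceMod ι (2 ^ L) (liftRep e L f) = regularRep (ZMod (2 ^ L)) e f :=
  (exists_mem_gamma_three_reduceMod_eq e L f).choose_spec.2

theorem liftRep_mem_chain (L : ℕ) (f : F) : liftRep e L f ∈ chain e L :=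
  ⟨liftRep_mem_gamma e L f, f, (reduceMod_liftRep e L f).symm⟩

noncomputable def discElem (k : ℕ) (f : F) (ℓ : ℕ) : Qgrp (chain e) k (k + ℓ) :=
  QuotientGroup.mk
    ⟨liftRep e (k + ℓ) f, chain_antitone (Nat.le_add_right k ℓ) (liftRep_mem_chain e _ f)⟩

variable {e}

theorem discElem_eq_mk {k ℓ : ℕ} {f : F} (z : chain e k)
    (hz : regularRep (ZMod (2 ^ (k + ℓ))) e f = reduceMod ι (2 ^ (k + ℓ)) z) :
    discElem e k f ℓ = QuotientGroup.mk z := by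
  refine QuotientGroup.eq.mpr (Subgroup.mem_subgroupOf.mpr (mem_coreIn_of_reduceMod_eq_one
    (mul_mem (inv_mem (liftRep_mem_gamma e _ f)) (chain_le_gamma k z.2)) ?_))
  rw [Subgroup.coe_mul, Subgroup.coe_inv, map_mul, map_inv, reduceMod_liftRep, hz, inv_mul_cancel]

theorem discElem_mem (k : ℕ) (f : F) : discElem e k f ∈ Disc (chain e) chain_succ_le k := by
  refine ⟨fun ℓ => ⟨_, Subgroup.mem_subgroupOf.mpr (liftRep_mem_chain e _ f), rfl⟩, fun ℓ => ?_⟩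
  exact (discElem_eq_mk _
    (regularRep_eq_reduceMod_of_le (by omega) (reduceMod_liftRep e _ f).symm)).symm

variable (e)

noncomputable def discHom (k : ℕ) : F →* Disc (chain e) chain_succ_le k :=
  MonoidHom.mk' (fun f => ⟨discElem e k f, discElem_mem k f⟩) fun f g =>
    Subtype.ext <| funext fun ℓ => discElem_eq_mk (f := f * g) (_ * _) <| by
      simp only [Subgroup.coe_mul, map_mul, reduceMod_liftRep]

theorem discHom_bijective (k : ℕ) : Function.Bijective (discHom e k) := by
  refine Disc.bijective_of_injective_apply _ 2 (fun f f' h => ?_) fun x ℓ => ?_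
  · have : Fact (1 < 2 ^ (k + 2)) := ⟨Nat.one_lt_two_pow (by omega)⟩
    have hcore := reduceMod_eq_one_of_mem_coreIn le_rfl
      (Subgroup.mem_subgroupOf.mp (QuotientGroup.eq.mp h))
    rw [Subgroup.coe_mul, Subgroup.coe_inv, map_mul, map_inv, inv_mul_eq_one, reduceMod_liftRep,
      reduceMod_liftRep] at hcore
    exact regularRep_injective e hcore
  · obtain ⟨y, hy, hyx⟩ := Subgroup.mem_map.mp (x.2.1 ℓ)
    obtain ⟨-, f, hf⟩ := mem_chain.mp (Subgroup.mem_subgroupOf.mp hy)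
    exact ⟨f, (discElem_eq_mk y hf).trans hyx⟩

noncomputable def discMulEquiv (k : ℕ) : Disc (chain e) chain_succ_le k ≃* F :=
  (MulEquiv.ofBijective (discHom e k) (discHom_bijective e k)).symm

end ChainDiscriminant

theorem eq_one_of_forall_conj_mem_chain {ι : Type*} [Fintype ι] [DecidableEq ι] {F : Type*}
    [Group F] [Fintype F] (e : F ⊕ F ↪ ι) {g : ℕ → Matrix.SpecialLinearGroup ι ℤ}
    (hg : g 0 ∈ Gamma ι 3) {x : Matrix.SpecialLinearGroup ι ℤ}
    (hx : ∀ ℓ, (g ℓ)⁻¹ * x * g ℓ ∈ chain e ℓ) : x = 1 := by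
  have hx3 : x ∈ Gamma ι 3 := by
    have := mul_mem (mul_mem hg (chain_le_gamma 0 (hx 0))) (inv_mem hg)
    rwa [show g 0 * ((g 0)⁻¹ * x * g 0) * (g 0)⁻¹ = x by group] at this
  have hpow : x ^ Fintype.card F = 1 := eq_one_of_forall_reduceMod_pow_eq_one le_rfl fun ℓ => by
    obtain ⟨-, f, hf⟩ := mem_chain.mp (hx ℓ)
    have hconj : ((g ℓ)⁻¹ * x * g ℓ) ^ Fintype.card F = (g ℓ)⁻¹ * x ^ Fintype.card F * g ℓ := by
      simpa using conj_pow (a := (g ℓ)⁻¹) (b := x)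
    have h1 : reduceMod ι (2 ^ ℓ) (((g ℓ)⁻¹ * x * g ℓ) ^ Fintype.card F) = 1 := by
      rw [map_pow, ← hf, ← map_pow, pow_card_eq_one, map_one]
    rw [hconj, map_mul, map_mul, map_inv, mul_assoc, inv_mul_eq_one, eq_comm, mul_eq_right] at h1
    exact h1
  by_contra hne
  exact gamma_three_isTorsionFree ⟨x, hx3⟩ (fun h => hne (congrArg Subtype.val h))
    (isOfFinOrder_iff_pow_eq_one.mpr ⟨_, Fintype.card_pos, Subtype.ext hpow⟩)

end StableChain

theorem molino_stable_finite_fibre_general (n : ℕ) :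
    ∃ G : Subgroup (Matrix.SpecialLinearGroup (Fin n) ℤ),
      G.FiniteIndex ∧ Monoid.IsTorsionFree ↥G ∧
      ∀ (F : Type) [Group F] [Fintype F], Nontrivial F →
        4 * (Fintype.card F + 2) ≤ n →
        ∃ (Gl : ℕ → Subgroup (Matrix.SpecialLinearGroup (Fin n) ℤ))
          (hdesc : ∀ ℓ, Gl (ℓ + 1) ≤ Gl ℓ),
          Gl 0 = G ∧
          (∀ ℓ, ((Gl ℓ).subgroupOf G).FiniteIndex) ∧
          (∀ k : ℕ, Nonempty (↥(Disc Gl hdesc k) ≃* F)) ∧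
          (∀ g : ℕ → Matrix.SpecialLinearGroup (Fin n) ℤ,
            (∀ ℓ, g ℓ ∈ G) → (∀ ℓ, (g ℓ)⁻¹ * g (ℓ + 1) ∈ Gl ℓ) →
            (⨅ ℓ : ℕ, conjSub (g ℓ) (Gl ℓ)) = ⊥) := by
  classical
  refine ⟨StableChain.Gamma (Fin n) 3, Subgroup.finiteIndex_ker _,
    StableChain.gamma_three_isTorsionFree, fun F _ _ _ hcard => ?_⟩
  obtain ⟨e⟩ : Nonempty (F ⊕ F ↪ Fin n) :=
    Function.Embedding.nonempty_of_card_le <| by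
      simp only [Fintype.card_sum, Fintype.card_fin]; omega
  refine ⟨StableChain.chain e, StableChain.chain_succ_le, StableChain.chain_zero,
    StableChain.chain_finiteIndex, fun k => ⟨StableChain.discMulEquiv e k⟩, fun g hg _ => ?_⟩
  refine (Subgroup.eq_bot_iff_forall _).mpr fun x hx => ?_
  exact StableChain.eq_one_of_forall_conj_mem_chain e (hg 0)
    fun ℓ => mem_conjSub.mp (Subgroup.mem_iInf.mp hx ℓ)

/-- **Theorem 1.5.** Fix `n ≥ 3`.  There is a torsion-free subgroup `G` of finite index in
`SL(n,ℤ)` such that for every non-trivial finite group `F` with `4(|F|+2) ≤ n` there is a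
group chain `{G_ℓ}_{ℓ ≥ 0}` in `G` (descending, each of finite index in `G`, `G_0 = G`)
such that:
(1) for every `k ≥ 0` the discriminant group of the truncated chain `{G_ℓ}_{ℓ ≥ k}` is
isomorphic to `F` (the chain is stable with constant discriminant group `F`); and
(2) for every compatible sequence `(g_ℓ)` in `G` (i.e. `g_ℓ⁻¹ g_{ℓ+1} ∈ G_ℓ`), the kernel
`⋂_ℓ g_ℓ G_ℓ g_ℓ⁻¹` of the conjugate chain is trivial. -/
theorem molino_stable_finite_fibre (n : ℕ) (hn : 3 ≤ n) :
    ∃ G : Subgroup (Matrix.SpecialLinearGroup (Fin n) ℤ),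
      G.FiniteIndex ∧ Monoid.IsTorsionFree ↥G ∧
      ∀ (F : Type) [Group F] [Fintype F], Nontrivial F →
        4 * (Fintype.card F + 2) ≤ n →
        ∃ (Gl : ℕ → Subgroup (Matrix.SpecialLinearGroup (Fin n) ℤ))
          (hdesc : ∀ ℓ, Gl (ℓ + 1) ≤ Gl ℓ),
          Gl 0 = G ∧
          (∀ ℓ, ((Gl ℓ).subgroupOf G).FiniteIndex) ∧
          (∀ k : ℕ, Nonempty (↥(Disc Gl hdesc k) ≃* F)) ∧
          (∀ g : ℕ → Matrix.SpecialLinearGroup (Fin n) ℤ,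
            (∀ ℓ, g ℓ ∈ G) → (∀ ℓ, (g ℓ)⁻¹ * g (ℓ + 1) ∈ Gl ℓ) →
            (⨅ ℓ : ℕ, conjSub (g ℓ) (Gl ℓ)) = ⊥) :=
  molino_stable_finite_fibre_general n
end

section
/- Let C be a profinite group, let G ⊆ C be a finitely generated dense subgroup, and let D ⊆ C be a closed subgroup of infinite index whose rational core is trivial, i.e. ⋂_{k∈G} k D k⁻¹ = {e}. Then there exists a group chain {G_ℓ}_{ℓ≥0} in G with G_0 = G whose discriminant group lim←_{ℓ} G_ℓ/core_G(G_ℓ) is isomorphic to D as a topological group. -/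
section DiscTopology

variable {Γ : Type*} [Group Γ]

/-- The inverse-limit topology on the discriminant group: the topology induced from the
product of the discrete topologies on the quotients `G_n/E_{n,ℓ}`. -/
def discTopology (G : ℕ → Subgroup Γ) (hG : ∀ ℓ, G (ℓ + 1) ≤ G ℓ) (n : ℕ) :
    TopologicalSpace ↥(Disc G hG n) :=
  TopologicalSpace.induced (fun x => (x : ∀ ℓ : ℕ, Qgrp G n (n + ℓ)))
    (@Pi.topologicalSpace ℕ (fun ℓ => Qgrp G n (n + ℓ)) (fun _ => ⊥))

end DiscTopology

section Cores

variable {Γ : Type*} [Group Γ]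

theorem normalCore_le_conjSub (D : Subgroup Γ) (g : Γ) : D.normalCore ≤ conjSub g D :=
  fun x hx => mem_conjSub.mpr (by simpa using hx g⁻¹)

theorem iInf_normalCore {ι : Sort*} (V : ι → Subgroup Γ) :
    ⨅ i, (V i).normalCore = (⨅ i, V i).normalCore := by
  ext x
  simp only [Subgroup.mem_iInf]
  change (∀ i, ∀ b, b * x * b⁻¹ ∈ V i) ↔ ∀ b, b * x * b⁻¹ ∈ ⨅ i, V i
  simp only [Subgroup.mem_iInf]
  exact forall_comm

end Cores

section Countability

variable {Γ : Type*} [Group Γ] [Group.FG Γ]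

theorem Group.countable_of_fg : Countable Γ := by
  obtain ⟨S, hS, f, hf⟩ := Group.fg_iff_exists_freeGroup_hom_surjective.mp ‹Group.FG Γ›
  have := hS.to_subtype
  exact hf.countable

/-- By Schreier's lemma a finite-index subgroup is finitely generated, hence the closure of
a finite subset of the countable group `Γ`. -/
theorem countable_setOf_finiteIndex : {H : Subgroup Γ | H.FiniteIndex}.Countable := by
  have := Group.countable_of_fg (Γ := Γ)
  refine (Set.countable_range fun s : Finset Γ => Subgroup.closure (s : Set Γ)).mono ?_
  intro H (hH : H.FiniteIndex)
  obtain ⟨S, hS, hSfin⟩ := H.fg_iff.mp ((Group.fg_iff_subgroup_fg H).mp H.fg_of_index_ne_zero)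
  exact ⟨hSfin.toFinset, by simpa using hS⟩

end Countability

section OpenNormalSubgroups

variable {C : Type*} [Group C] [TopologicalSpace C] [IsTopologicalGroup C] [CompactSpace C]

theorem finiteIndex_of_isOpen {U : Subgroup C} (hU : IsOpen (U : Set C)) : U.FiniteIndex :=
  have := U.quotient_finite_of_isOpen hU
  U.finiteIndex_of_finite_quotient

theorem isOpen_normalCore {U : Subgroup C} (hU : IsOpen (U : Set C)) :
    IsOpen (U.normalCore : Set C) :=
  have := finiteIndex_of_isOpen hU
  U.normalCore.isOpen_of_isClosed_of_finiteIndex (U.normalCore_isClosed (U.isClosed_of_isOpen hU))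

/-- An open subgroup is closed, hence the closure of its trace on a dense subgroup. -/
theorem countable_openNormalSubgroup_of_dense {G : Subgroup C} [Group.FG G]
    (hG : Dense (G : Set C)) : Countable (OpenNormalSubgroup C) := by
  have := (countable_setOf_finiteIndex (Γ := G)).to_subtype
  let trace : OpenNormalSubgroup C → {H : Subgroup G | H.FiniteIndex} := fun U =>
    ⟨(U : Subgroup C).subgroupOf G, by
      have := finiteIndex_of_isOpen U.isOpen
      exact Subgroup.instFiniteIndex_subgroupOf _ _⟩
  refine Function.Injective.countable (f := trace) fun U U' h => ?_
  have hclosure (W : OpenNormalSubgroup C) :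
      closure (((W : Subgroup C) : Set C) ∩ G) = (W : Subgroup C) :=
    (closure_minimal Set.inter_subset_left ((W : Subgroup C).isClosed_of_isOpen W.isOpen)).antisymm
      (hG.open_subset_closure_inter W.isOpen)
  have hUG := congrArg SetLike.coe (Subgroup.subgroupOf_inj.mp (congrArg Subtype.val h))
  rw [Subgroup.coe_inf, Subgroup.coe_inf] at hUG
  exact OpenNormalSubgroup.toSubgroup_injective
    (SetLike.coe_injective (by rw [← hclosure U, hUG, hclosure U']))

end OpenNormalSubgroups

section CofinalSequence

variable {C : Type*} [Group C] [TopologicalSpace C]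

theorem exists_antitone_openNormal_cofinal [Countable (OpenNormalSubgroup C)] :
    ∃ N : ℕ → Subgroup C, N 0 = ⊤ ∧ Antitone N ∧ (∀ n, IsOpen (N n : Set C) ∧ (N n).Normal) ∧
      ∀ U : OpenNormalSubgroup C, ∃ n, N n ≤ U := by
  have : Nonempty (OpenNormalSubgroup C) := ⟨⟨⊤, Subgroup.normal_top⟩⟩
  obtain ⟨f, hf⟩ := exists_surjective_nat (OpenNormalSubgroup C)
  refine ⟨fun n => (Finset.range n).inf fun i => (f i : Subgroup C), rfl,
    fun m n hmn => Finset.inf_mono (Finset.range_mono hmn), fun n => ?_, fun U => ?_⟩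
  · refine Finset.inf_induction (p := fun H : Subgroup C => IsOpen (H : Set C) ∧ H.Normal)
      ⟨isOpen_univ, Subgroup.normal_top⟩
      (fun _ h₁ _ h₂ => ⟨h₁.1.inter h₂.1, @Subgroup.normal_inf_normal _ _ _ _ h₁.2 h₂.2⟩)
      fun i _ => ⟨(f i).isOpen, (f i).isNormal'⟩
  · obtain ⟨i, rfl⟩ := hf U
    exact ⟨i + 1, Finset.inf_le (Finset.self_mem_range_succ i)⟩

end CofinalSequence

section Profinite

variable {C : Type*} [Group C] [TopologicalSpace C] [IsTopologicalGroup C] [CompactSpace C]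
  [TotallyDisconnectedSpace C]

/-- If `x ∉ D`, then `x U` misses the closed set `D` for some open normal subgroup `U`,
and then `x ∉ N ⊔ D = D N` as soon as `N ≤ U`. -/
theorem iInf_sup_eq_of_isClosed {N : ℕ → Subgroup C} (hN : ∀ n, (N n).Normal)
    (hcofinal : ∀ U : OpenNormalSubgroup C, ∃ n, N n ≤ U) {D : Subgroup C}
    (hD : IsClosed (D : Set C)) : ⨅ n, (N n ⊔ D) = D := by
  refine le_antisymm (fun x hx => ?_) (le_iInf fun _ => le_sup_right)
  by_contra hxD
  obtain ⟨U, hU⟩ := ProfiniteGrp.exist_openNormalSubgroup_sub_open_nhds_of_one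
    (hD.isOpen_compl.preimage (continuous_const_mul x)) (by simpa using hxD)
  obtain ⟨n, hn⟩ := hcofinal U
  have := hN n
  obtain ⟨d, hd, y, hy, rfl⟩ :=
    Subgroup.mem_sup_of_normal_right.mp ((sup_comm (N n) D).le (Subgroup.mem_iInf.mp hx n))
  exact hU (hn (inv_mem hy)) (by simpa using hd)

end Profinite

section DenseSubgroup

variable {C : Type*} [Group C] [TopologicalSpace C] [IsTopologicalGroup C]

theorem coreIn_inf_eq_of_dense {H V : Subgroup C} (hH : Dense (H : Set C))
    (hV : IsClosed (V : Set C)) : coreIn H (V ⊓ H) = V.normalCore ⊓ H := by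
  ext x
  simp only [mem_coreIn, Subgroup.mem_inf]
  constructor
  · intro hx
    refine ⟨fun c => ?_, by simpa using (hx 1 H.one_mem).2⟩
    have hclosed : IsClosed {c : C | c * x * c⁻¹ ∈ V} := hV.preimage (by fun_prop)
    have hsub : (H : Set C) ⊆ {c : C | c * x * c⁻¹ ∈ V} := fun h hh => by
      simpa using (hx h⁻¹ (H.inv_mem hh)).1
    exact hclosed.closure_subset_iff.mpr hsub (hH.closure_eq.symm ▸ Set.mem_univ c)
  · rintro ⟨hxV, hxH⟩ h hh
    exact ⟨by simpa using hxV h⁻¹, H.mul_mem (H.mul_mem (H.inv_mem hh) hxH) hh⟩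

theorem surjective_mk_comp_subtype_of_dense {H N : Subgroup C} [N.Normal]
    (hH : Dense (H : Set C)) (hN : IsOpen (N : Set C)) :
    Function.Surjective ((QuotientGroup.mk' N).comp H.subtype) := by
  intro q
  induction q using QuotientGroup.induction_on with | H c => ?_
  obtain ⟨h, hh, hhH⟩ := hH.inter_open_nonempty {y | c⁻¹ * y ∈ N}
    (hN.preimage (continuous_const_mul c⁻¹)) ⟨c, by simp⟩
  refine ⟨⟨h, hhH⟩, QuotientGroup.eq.mpr ?_⟩
  simpa using N.inv_mem hh

noncomputable def quotientSubgroupOfEquivOfDense {H N : Subgroup C} [N.Normal]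
    (hH : Dense (H : Set C)) (hN : IsOpen (N : Set C)) : H ⧸ N.subgroupOf H ≃* C ⧸ N :=
  (QuotientGroup.quotientMulEquivOfEq
      (by ext; simp [Subgroup.mem_subgroupOf, QuotientGroup.eq_one_iff])).trans
    (QuotientGroup.quotientKerEquivOfSurjective _ (surjective_mk_comp_subtype_of_dense hH hN))

theorem quotientSubgroupOfEquivOfDense_mk {H N : Subgroup C} [N.Normal]
    (hH : Dense (H : Set C)) (hN : IsOpen (N : Set C)) (h : H) :
    quotientSubgroupOfEquivOfDense hH hN h = (h : C) := by
  simp [quotientSubgroupOfEquivOfDense, QuotientGroup.quotientKerEquivOfSurjective]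

end DenseSubgroup

section TraceChain

variable {C : Type*} [Group C] [TopologicalSpace C] [IsTopologicalGroup C]
  {V Gl : ℕ → Subgroup C}

theorem subgroupOf_coreIn_eq_of_trace (hVopen : ∀ ℓ, IsOpen (V ℓ : Set C))
    (hGl : ∀ ℓ, Gl ℓ = V ℓ ⊓ Gl 0) (hdense : Dense (Gl 0 : Set C)) (m : ℕ) :
    (coreIn (Gl 0) (Gl m)).subgroupOf (Gl 0) = (V m).normalCore.subgroupOf (Gl 0) := by
  rw [hGl m, coreIn_inf_eq_of_dense hdense ((V m).isClosed_of_isOpen (hVopen m)),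
    Subgroup.inf_subgroupOf_right]

variable [CompactSpace C]

/-- The projection `C → C ⧸ core_C(V_m) ≃ G_0 ⧸ core_{G_0}(G_m)`. -/
noncomputable def traceProj (hVopen : ∀ ℓ, IsOpen (V ℓ : Set C))
    (hGl : ∀ ℓ, Gl ℓ = V ℓ ⊓ Gl 0) (hdense : Dense (Gl 0 : Set C)) (m : ℕ) :
    C →* Qgrp Gl 0 m :=
  ((QuotientGroup.quotientMulEquivOfEq (subgroupOf_coreIn_eq_of_trace hVopen hGl hdense m)).trans
    (quotientSubgroupOfEquivOfDense hdense (isOpen_normalCore (hVopen m)))).symm.toMonoidHom.comp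
    (QuotientGroup.mk' _)

variable (hVopen : ∀ ℓ, IsOpen (V ℓ : Set C)) (hGl : ∀ ℓ, Gl ℓ = V ℓ ⊓ Gl 0)
  (hdense : Dense (Gl 0 : Set C))

theorem traceProj_coe (m : ℕ) (g : Gl 0) : traceProj hVopen hGl hdense m g = g := by
  simp [traceProj, MulEquiv.symm_apply_eq, quotientSubgroupOfEquivOfDense_mk]

theorem traceProj_eq_iff (m : ℕ) {c c' : C} :
    traceProj hVopen hGl hdense m c = traceProj hVopen hGl hdense m c' ↔
      c⁻¹ * c' ∈ (V m).normalCore := by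
  simp [traceProj, QuotientGroup.eq]

theorem exists_traceProj_coe_eq (m : ℕ) (c : C) :
    ∃ g : Gl 0, traceProj hVopen hGl hdense m g = traceProj hVopen hGl hdense m c := by
  obtain ⟨g, hg⟩ := QuotientGroup.mk_surjective (traceProj hVopen hGl hdense m c)
  exact ⟨g, (traceProj_coe hVopen hGl hdense m g).trans hg⟩

theorem imgSub_eq_map_traceProj (m : ℕ) :
    imgSub Gl 0 m = (V m).map (traceProj hVopen hGl hdense m) := by
  apply le_antisymm
  · rintro _ ⟨g, hg, rfl⟩
    have hgV : (g : C) ∈ V m := ((hGl m).le (Subgroup.mem_subgroupOf.mp hg)).1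
    exact ⟨g, hgV, traceProj_coe hVopen hGl hdense m g⟩
  · rintro _ ⟨c, hc, rfl⟩
    obtain ⟨g, hg⟩ := exists_traceProj_coe_eq hVopen hGl hdense m c
    have hgc := (traceProj_eq_iff hVopen hGl hdense m).mp hg.symm
    have hgV : (g : C) = c * (c⁻¹ * g) := by group
    refine ⟨g, Subgroup.mem_subgroupOf.mpr ((hGl m).ge ⟨?_, g.2⟩), ?_⟩
    · rw [hgV]
      exact (V m).mul_mem hc ((V m).normalCore_le hgc)
    · rw [← hg, traceProj_coe]
      rfl

theorem bond_traceProj (hVanti : Antitone V) (hdesc : ∀ ℓ, Gl (ℓ + 1) ≤ Gl ℓ) (m : ℕ) (c : C) :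
    bond Gl hdesc 0 m (traceProj hVopen hGl hdense (m + 1) c) =
      traceProj hVopen hGl hdense m c := by
  obtain ⟨g, hg⟩ := exists_traceProj_coe_eq hVopen hGl hdense (m + 1) c
  rw [← hg, traceProj_coe, bond, QuotientGroup.map_mk, MonoidHom.id_apply,
    ← traceProj_coe hVopen hGl hdense m, traceProj_eq_iff]
  exact Subgroup.normalCore_mono (hVanti m.le_succ) ((traceProj_eq_iff hVopen hGl hdense _).mp hg)

theorem isLocallyConstant_traceProj (m : ℕ) :
    IsLocallyConstant (traceProj hVopen hGl hdense m) := by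
  have := QuotientGroup.discreteTopology (isOpen_normalCore (hVopen m))
  rw [traceProj, MonoidHom.coe_comp, QuotientGroup.coe_mk']
  exact ((IsLocallyConstant.iff_continuous _).mpr continuous_quotient_mk').comp _

end TraceChain

section NestedCosets

variable {C : Type*} [Group C] [TopologicalSpace C] [IsTopologicalGroup C] [CompactSpace C]

theorem exists_forall_inv_mul_mem_of_compatible {K : ℕ → Subgroup C}
    (hKclosed : ∀ ℓ, IsClosed (K ℓ : Set C)) (hKanti : Antitone K) {c : ℕ → C}
    (hc : ∀ ℓ, (c ℓ)⁻¹ * c (ℓ + 1) ∈ K ℓ) : ∃ x, ∀ ℓ, (c ℓ)⁻¹ * x ∈ K ℓ := by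
  let F : ℕ → Set C := fun ℓ => {x | (c ℓ)⁻¹ * x ∈ K ℓ}
  have hFclosed (ℓ : ℕ) : IsClosed (F ℓ) := (hKclosed ℓ).preimage (continuous_const_mul _)
  have hFanti (ℓ : ℕ) : F (ℓ + 1) ⊆ F ℓ := fun x (hx : (c (ℓ + 1))⁻¹ * x ∈ K (ℓ + 1)) => by
    have hsplit : (c ℓ)⁻¹ * x = ((c ℓ)⁻¹ * c (ℓ + 1)) * ((c (ℓ + 1))⁻¹ * x) := by group
    change (c ℓ)⁻¹ * x ∈ K ℓ
    rw [hsplit]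
    exact (K ℓ).mul_mem (hc ℓ) (hKanti ℓ.le_succ hx)
  have hFne (ℓ : ℕ) : (F ℓ).Nonempty := ⟨c ℓ, by simp [F]⟩
  obtain ⟨x, hx⟩ := IsCompact.nonempty_iInter_of_sequence_nonempty_isCompact_isClosed F hFanti
    hFne (hFclosed 0).isCompact hFclosed
  exact ⟨x, Set.mem_iInter.mp hx⟩

end NestedCosets

section DiscriminantTopology

variable {Γ : Type*} [Group Γ] {G : ℕ → Subgroup Γ} {hG : ∀ ℓ, G (ℓ + 1) ≤ G ℓ} {n : ℕ}

theorem t2Space_discTopology : @T2Space (Disc G hG n) (discTopology G hG n) :=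
  letI : ∀ ℓ, TopologicalSpace (Qgrp G n (n + ℓ)) := fun _ => ⊥
  have : ∀ ℓ, DiscreteTopology (Qgrp G n (n + ℓ)) := fun _ => ⟨rfl⟩
  inferInstanceAs (T2Space (Disc G hG n))

theorem continuous_discTopology_of_isLocallyConstant {X : Type*} [TopologicalSpace X]
    {f : X → Disc G hG n} (hf : ∀ ℓ, IsLocallyConstant fun x => (f x : ∀ ℓ, Qgrp G n (n + ℓ)) ℓ) :
    @Continuous X _ _ (discTopology G hG n) f :=
  letI : ∀ ℓ, TopologicalSpace (Qgrp G n (n + ℓ)) := fun _ => ⊥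
  continuous_induced_rng.mpr (continuous_pi fun ℓ => (hf ℓ).continuous)

end DiscriminantTopology

section TraceChainDiscriminant

variable {C : Type*} [Group C] [TopologicalSpace C] [IsTopologicalGroup C] [CompactSpace C]
  {V Gl : ℕ → Subgroup C} (hVopen : ∀ ℓ, IsOpen (V ℓ : Set C)) (hGl : ∀ ℓ, Gl ℓ = V ℓ ⊓ Gl 0)
  (hdense : Dense (Gl 0 : Set C)) (hVanti : Antitone V) (hdesc : ∀ ℓ, Gl (ℓ + 1) ≤ Gl ℓ)
  {D : Subgroup C}

noncomputable def traceDiscHom (hDV : ∀ ℓ, D ≤ V ℓ) : D →* Disc Gl hdesc 0 :=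
  ((MonoidHom.pi fun ℓ => traceProj hVopen hGl hdense (0 + ℓ)).comp D.subtype).codRestrict _
    fun d => ⟨fun ℓ => (imgSub_eq_map_traceProj hVopen hGl hdense (0 + ℓ)).ge ⟨d, hDV _ d.2, rfl⟩,
      fun ℓ => bond_traceProj hVopen hGl hdense hVanti hdesc (0 + ℓ) d⟩

theorem traceDiscHom_injective (hDV : ∀ ℓ, D ≤ V ℓ) (hK : ⨅ ℓ, (V ℓ).normalCore = ⊥) :
    Function.Injective (traceDiscHom hVopen hGl hdense hVanti hdesc hDV) := by
  refine (injective_iff_map_eq_one _).mpr fun d hd => ?_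
  have hdK (ℓ : ℕ) : (d : C) ∈ (V ℓ).normalCore := by
    have hℓ : traceProj hVopen hGl hdense (0 + ℓ) d = 1 := congrFun (congrArg Subtype.val hd) ℓ
    rw [← map_one (traceProj hVopen hGl hdense (0 + ℓ))] at hℓ
    simpa using (traceProj_eq_iff hVopen hGl hdense (0 + ℓ)).mp hℓ.symm
  have : (d : C) ∈ (⊥ : Subgroup C) := hK ▸ Subgroup.mem_iInf.mpr hdK
  exact Subtype.ext (Subgroup.mem_bot.mp this)

/-- Representatives `c_ℓ ∈ V_ℓ` of the coordinates of a point of the discriminant form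
nested cosets `c_ℓ core(V_ℓ)`; a common point lies in every `V_ℓ`, hence in `D`. -/
theorem traceDiscHom_surjective (hDV : ∀ ℓ, D ≤ V ℓ) (hVD : ⨅ ℓ, V ℓ ≤ D) :
    Function.Surjective (traceDiscHom hVopen hGl hdense hVanti hdesc hDV) := by
  rintro ⟨x, hx_img, hx_bond⟩
  have hrep (ℓ : ℕ) : ∃ c ∈ V (0 + ℓ), traceProj hVopen hGl hdense (0 + ℓ) c = x ℓ := by
    simpa [imgSub_eq_map_traceProj hVopen hGl hdense] using hx_img ℓ
  choose c hcV hcx using hrep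
  have hcompat (ℓ : ℕ) : (c ℓ)⁻¹ * c (ℓ + 1) ∈ (V (0 + ℓ)).normalCore := by
    rw [← traceProj_eq_iff hVopen hGl hdense, hcx, ← hx_bond, ← hcx (ℓ + 1)]
    exact bond_traceProj hVopen hGl hdense hVanti hdesc (0 + ℓ) _
  obtain ⟨y, hy⟩ := exists_forall_inv_mul_mem_of_compatible
    (fun ℓ => (V (0 + ℓ)).normalCore.isClosed_of_isOpen (isOpen_normalCore (hVopen _)))
    (fun _ _ h => Subgroup.normalCore_mono (hVanti (by omega))) hcompat
  have hyV (ℓ : ℕ) : y ∈ V (0 + ℓ) := by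
    have hsplit : y = c ℓ * ((c ℓ)⁻¹ * y) := by group
    rw [hsplit]
    exact (V _).mul_mem (hcV ℓ) ((V _).normalCore_le (hy ℓ))
  have hyD : y ∈ D := hVD (Subgroup.mem_iInf.mpr fun ℓ => by simpa using hyV ℓ)
  refine ⟨⟨y, hyD⟩, Subtype.ext (funext fun ℓ => ?_)⟩
  exact ((traceProj_eq_iff hVopen hGl hdense _).mpr (hy ℓ)).symm.trans (hcx ℓ)

theorem continuous_traceDiscHom (hDV : ∀ ℓ, D ≤ V ℓ) :
    @Continuous _ _ inferInstance (discTopology Gl hdesc 0)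
      (traceDiscHom hVopen hGl hdense hVanti hdesc hDV) :=
  continuous_discTopology_of_isLocallyConstant fun ℓ =>
    (isLocallyConstant_traceProj hVopen hGl hdense (0 + ℓ)).comp_continuous continuous_subtype_val

end TraceChainDiscriminant

theorem exists_continuousMulEquiv_disc_of_trace {C : Type*} [Group C] [TopologicalSpace C]
    [IsTopologicalGroup C] [CompactSpace C] {V Gl : ℕ → Subgroup C}
    (hVopen : ∀ ℓ, IsOpen (V ℓ : Set C)) (hGl : ∀ ℓ, Gl ℓ = V ℓ ⊓ Gl 0)
    (hdense : Dense (Gl 0 : Set C)) (hVanti : Antitone V) (hdesc : ∀ ℓ, Gl (ℓ + 1) ≤ Gl ℓ)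
    {D : Subgroup C} (hVD : ⨅ ℓ, V ℓ = D)
    (hK : ⨅ ℓ, (V ℓ).normalCore = ⊥) :
    ∃ e : D ≃* Disc Gl hdesc 0,
      @Continuous _ _ inferInstance (discTopology Gl hdesc 0) e ∧
      @Continuous _ _ (discTopology Gl hdesc 0) inferInstance e.symm := by
  have hDV (ℓ : ℕ) : D ≤ V ℓ := hVD ▸ iInf_le V ℓ
  let e := MulEquiv.ofBijective (traceDiscHom hVopen hGl hdense hVanti hdesc hDV)
    ⟨traceDiscHom_injective hVopen hGl hdense hVanti hdesc hDV hK,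
      traceDiscHom_surjective hVopen hGl hdense hVanti hdesc hDV hVD.le⟩
  have hcont := continuous_traceDiscHom hVopen hGl hdense hVanti hdesc hDV
  let _ : TopologicalSpace (Disc Gl hdesc 0) := discTopology Gl hdesc 0
  have := t2Space_discTopology (hG := hdesc) (n := 0)
  have hDclosed : IsClosed (D : Set C) := by
    rw [← hVD, Subgroup.coe_iInf]
    exact isClosed_iInter fun ℓ => (V ℓ).isClosed_of_isOpen (hVopen ℓ)
  have := isCompact_iff_compactSpace.mp hDclosed.isCompact
  exact ⟨e, hcont, (hcont.homeoOfEquivCompactToT2 (f := e.toEquiv)).symm.continuous⟩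

theorem lenstra_construction_general
    {C : Type*} [Group C] [TopologicalSpace C] [IsTopologicalGroup C]
    [CompactSpace C] [TotallyDisconnectedSpace C]
    (G : Subgroup C) (hGfg : Group.FG ↥G) (hGdense : Dense (G : Set C))
    (D : Subgroup C) (hDclosed : IsClosed (D : Set C))
    (hDcore : (⨅ k : ↥G, conjSub (k : C) D) = ⊥) :
    ∃ (Gl : ℕ → Subgroup C) (hdesc : ∀ ℓ, Gl (ℓ + 1) ≤ Gl ℓ),
      Gl 0 = G ∧
      (∀ ℓ, ((Gl ℓ).subgroupOf G).FiniteIndex) ∧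
      ∃ e : ↥D ≃* ↥(Disc Gl hdesc 0),
        @Continuous _ _ inferInstance (discTopology Gl hdesc 0) ⇑e ∧
        @Continuous _ _ (discTopology Gl hdesc 0) inferInstance ⇑e.symm := by
  have := countable_openNormalSubgroup_of_dense hGdense
  obtain ⟨N, hN0, hNanti, hN, hNcofinal⟩ := exists_antitone_openNormal_cofinal (C := C)
  set V : ℕ → Subgroup C := fun ℓ => N ℓ ⊔ D
  have hVopen (ℓ : ℕ) : IsOpen (V ℓ : Set C) := Subgroup.isOpen_mono le_sup_left (hN ℓ).1
  have hVanti : Antitone V := fun _ _ h => sup_le_sup_right (hNanti h) D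
  have hVD : ⨅ ℓ, V ℓ = D := iInf_sup_eq_of_isClosed (fun ℓ => (hN ℓ).2) hNcofinal hDclosed
  have hK : ⨅ ℓ, (V ℓ).normalCore = ⊥ := by
    rw [iInf_normalCore, hVD, eq_bot_iff, ← hDcore]
    exact le_iInf fun k => normalCore_le_conjSub D k
  have hV0 : V 0 = ⊤ := by simp [V, hN0]
  refine ⟨fun ℓ => V ℓ ⊓ G, fun ℓ => inf_le_inf_right G (hVanti ℓ.le_succ), by simp [hV0],
    fun ℓ => ?_, ?_⟩
  · rw [Subgroup.inf_subgroupOf_right]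
    have := finiteIndex_of_isOpen (hVopen ℓ)
    infer_instance
  · exact exists_continuousMulEquiv_disc_of_trace hVopen (fun ℓ => by simp [hV0]) (by simpa [hV0])
      hVanti _ hVD hK

/-- **Proposition 9.1.** Let `C` be a profinite group, `G ⊆ C` a finitely generated dense
subgroup, and `D ⊆ C` a closed subgroup of infinite index whose rational core
`⋂_{k ∈ G} k D k⁻¹` is trivial.  Then there is a group chain `{G_ℓ}_{ℓ ≥ 0}` in `G`
with `G_0 = G` whose discriminant group `lim←_ℓ G_ℓ/core_G(G_ℓ)` is isomorphic to `D`
as a topological group. -/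
theorem lenstra_construction
    {C : Type*} [Group C] [TopologicalSpace C] [IsTopologicalGroup C]
    [CompactSpace C] [T2Space C] [TotallyDisconnectedSpace C]
    (G : Subgroup C) (hGfg : Group.FG ↥G) (hGdense : Dense (G : Set C))
    (D : Subgroup C) (hDclosed : IsClosed (D : Set C)) (hDindex : D.index = 0)
    (hDcore : (⨅ k : ↥G, conjSub (k : C) D) = ⊥) :
    ∃ (Gl : ℕ → Subgroup C) (hdesc : ∀ ℓ, Gl (ℓ + 1) ≤ Gl ℓ),
      Gl 0 = G ∧
      (∀ ℓ, ((Gl ℓ).subgroupOf G).FiniteIndex) ∧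
      ∃ e : ↥D ≃* ↥(Disc Gl hdesc 0),
        @Continuous _ _ inferInstance (discTopology Gl hdesc 0) ⇑e ∧
        @Continuous _ _ (discTopology Gl hdesc 0) inferInstance ⇑e.symm :=
  lenstra_construction_general G hGfg hGdense D hDclosed hDcore
end

section
/- Let C be a profinite group, let G ⊆ C be a finitely generated dense subgroup, and let D ⊆ C be a closed subgroup of infinite index such that ⋂_{k∈U} k D k⁻¹ = {e} for every clopen neighborhood U of the identity in C. Choose a decreasing sequence {U_ℓ}_{ℓ≥1} of open normal subgroups of C with ⋂_{ℓ} U_ℓ = {e}, and set G_0 = G and G_ℓ = G ∩ (D·U_ℓ) for ℓ ≥ 1. Then {G_ℓ}_{ℓ≥0} is a group chain in G, and for every n ≥ 0 the discriminant group lim←_{ℓ≥n} G_ℓ/E_{n,ℓ} of the truncated chain {G_ℓ}_{ℓ≥n} is isomorphic to D as a topological group; in particular the chain is stable with constant discriminant group D. -/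
theorem bond_mk {Γ : Type*} [Group Γ] (G : ℕ → Subgroup Γ) (hG : ∀ ℓ, G (ℓ + 1) ≤ G ℓ)
    (n ℓ : ℕ) (g : G n) : bond G hG n ℓ (QuotientGroup.mk g) = QuotientGroup.mk g :=
  rfl

theorem t2Space_discTopology_s3 {Γ : Type*} [Group Γ] (G : ℕ → Subgroup Γ)
    (hG : ∀ ℓ, G (ℓ + 1) ≤ G ℓ) (n : ℕ) : @T2Space _ (discTopology G hG n) := by
  let _ : ∀ k, TopologicalSpace (Qgrp G n (n + k)) := fun _ => ⊥
  have : ∀ k, DiscreteTopology (Qgrp G n (n + k)) := fun _ => ⟨rfl⟩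
  exact (inferInstance : T2Space (Disc G hG n))

theorem Antitone.iInf_add_left {α : Type*} [CompleteLattice α] {f : ℕ → α} (hf : Antitone f)
    (n : ℕ) : ⨅ k, f (n + k) = ⨅ k, f k := by
  simpa only [add_comm] using hf.iInf_nat_add n

theorem inf_succ_le_inf {Γ : Type*} [Group Γ] {G : Subgroup Γ} {V : ℕ → Subgroup Γ}
    (hV : Antitone V) (ℓ : ℕ) : G ⊓ V (ℓ + 1) ≤ G ⊓ V ℓ :=
  inf_le_inf_left G (hV ℓ.le_succ)

section CoreQuotients

variable {Γ : Type*} [Group Γ]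

theorem coreIn_le (H K : Subgroup Γ) : coreIn H K ≤ K := fun x hx => by
  simpa using mem_coreIn.mp hx 1 H.one_mem

theorem normal_le_coreIn {H K N : Subgroup Γ} [N.Normal] (hNK : N ≤ K) : N ≤ coreIn H K :=
  fun x hx => mem_coreIn.mpr fun h _ => hNK (by simpa using Subgroup.Normal.conj_mem ‹_› x hx h⁻¹)

theorem coreIn_eq_biInf_conjSub (H K : Subgroup Γ) :
    coreIn H K = ⨅ h ∈ (H : Set Γ), conjSub h K := by
  ext x
  simp only [mem_coreIn, Subgroup.mem_iInf, mem_conjSub, SetLike.mem_coe]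

theorem coreIn_iInf {ι : Sort*} (H : Subgroup Γ) (K : ι → Subgroup Γ) :
    coreIn H (⨅ i, K i) = ⨅ i, coreIn H (K i) := by
  ext x
  simp only [mem_coreIn, Subgroup.mem_iInf]
  exact ⟨fun hx i h hh => hx h hh i, fun hx h hh i => hx i h hh⟩

variable {H V E N : Subgroup Γ} [(E.subgroupOf H).Normal] [(N.subgroupOf V).Normal]

def quotientSubgroupOfMap (hHV : H ≤ V) (hEN : E ≤ N) :
    H ⧸ E.subgroupOf H →* V ⧸ N.subgroupOf V :=
  QuotientGroup.map _ _ (Subgroup.inclusion hHV) fun _ hx => hEN hx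

theorem mk_eq_quotientSubgroupOfMap_mk_iff (hHV : H ≤ V) (hEN : E ≤ N) (v : V) (h : H) :
    QuotientGroup.mk v = quotientSubgroupOfMap hHV hEN (QuotientGroup.mk h) ↔
      (v : Γ)⁻¹ * h ∈ N :=
  QuotientGroup.eq.trans Subgroup.mem_subgroupOf

theorem quotientSubgroupOfMap_bijective (hHV : H ≤ V) (hEN : E ≤ N)
    (hNE : ∀ x ∈ H, x ∈ N → x ∈ E) (hVHN : ∀ v ∈ V, ∃ h ∈ H, v⁻¹ * h ∈ N) :
    Function.Bijective (quotientSubgroupOfMap hHV hEN) := by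
  refine ⟨(injective_iff_map_eq_one _).mpr fun q hq => ?_, fun q => ?_⟩
  · obtain ⟨h, rfl⟩ := QuotientGroup.mk_surjective q
    have hN : (h : Γ) ∈ N := Subgroup.mem_subgroupOf.mp
      ((QuotientGroup.eq_one_iff (Subgroup.inclusion hHV h)).mp hq)
    exact (QuotientGroup.eq_one_iff _).mpr (Subgroup.mem_subgroupOf.mpr (hNE h h.2 hN))
  · obtain ⟨v, rfl⟩ := QuotientGroup.mk_surjective q
    obtain ⟨h, hH, hvh⟩ := hVHN v v.2
    refine ⟨QuotientGroup.mk ⟨h, hH⟩, QuotientGroup.eq.mpr (Subgroup.mem_subgroupOf.mpr ?_)⟩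
    simpa using N.inv_mem hvh

/-- `H/E ≃* V/N` for `E = H ∩ N` and `V = H N`. -/
noncomputable def quotientSubgroupOfEquiv (hHV : H ≤ V) (hEN : E ≤ N)
    (hNE : ∀ x ∈ H, x ∈ N → x ∈ E) (hVHN : ∀ v ∈ V, ∃ h ∈ H, v⁻¹ * h ∈ N) :
    H ⧸ E.subgroupOf H ≃* V ⧸ N.subgroupOf V :=
  MulEquiv.ofBijective _ (quotientSubgroupOfMap_bijective hHV hEN hNE hVHN)

end CoreQuotients

section DenseSubgroups

variable {C : Type*} [Group C] [TopologicalSpace C] [IsTopologicalGroup C]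

theorem Dense.exists_mem_inf_inv_mul_mem {G : Subgroup C} (hG : Dense (G : Set C))
    {N V : Subgroup C} (hN : IsOpen (N : Set C)) (hNV : N ≤ V) {v : C} (hv : v ∈ V) :
    ∃ g ∈ G ⊓ V, v⁻¹ * g ∈ N := by
  obtain ⟨g, hgG, hvg⟩ := hG.exists_mem_open (hN.preimage (continuous_const_mul v⁻¹))
    ⟨v, show v⁻¹ * v ∈ N by simp⟩
  exact ⟨g, ⟨hgG, by simpa using V.mul_mem hv (hNV hvg)⟩, hvg⟩

theorem coreIn_inf_of_dense {G : Subgroup C} (hG : Dense (G : Set C)) {V W : Subgroup C}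
    (hV : IsOpen (V : Set C)) (hW : IsClosed (W : Set C)) :
    coreIn (G ⊓ V) (G ⊓ W) = G ⊓ coreIn V W := by
  ext x
  simp only [Subgroup.mem_inf, mem_coreIn]
  constructor
  · intro hx
    refine ⟨by simpa using (hx 1 ⟨G.one_mem, V.one_mem⟩).1, fun k hk => by_contra fun hxk => ?_⟩
    have hopen : IsOpen ((V : Set C) ∩ {y | y⁻¹ * x * y ∉ W}) :=
      hV.inter (hW.isOpen_compl.preimage (by fun_prop))
    obtain ⟨g, hgG, hgV, hgW⟩ := hG.exists_mem_open hopen ⟨k, hk, hxk⟩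
    exact hgW (hx g ⟨hgG, hgV⟩).2
  · rintro ⟨hxG, hx⟩ h ⟨hhG, hhV⟩
    exact ⟨G.mul_mem (G.mul_mem (G.inv_mem hhG) hxG) hhG, hx h hhV⟩

variable [CompactSpace C]

theorem finiteIndex_of_isOpen_s3 {W : Subgroup C} (hW : IsOpen (W : Set C)) : W.FiniteIndex :=
  have : Finite (C ⧸ W) := W.quotient_finite_of_isOpen hW
  W.finiteIndex_of_finite_quotient

theorem isOpen_coreIn (V : Subgroup C) {W : Subgroup C} (hW : IsOpen (W : Set C)) :
    IsOpen (coreIn V W : Set C) := by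
  have : W.FiniteIndex := finiteIndex_of_isOpen_s3 hW
  have hcore : IsOpen (W.normalCore : Set C) :=
    W.normalCore.isOpen_of_isClosed_of_finiteIndex (W.normalCore_isClosed (W.isClosed_of_isOpen hW))
  exact Subgroup.isOpen_mono (normal_le_coreIn W.normalCore_le) hcore

theorem finiteIndex_inf_subgroupOf (G : Subgroup C) {V : Subgroup C} (hV : IsOpen (V : Set C)) :
    ((G ⊓ V).subgroupOf G).FiniteIndex := by
  have : V.FiniteIndex := finiteIndex_of_isOpen_s3 hV
  rw [Subgroup.inf_subgroupOf_left]
  infer_instance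

theorem exists_forall_inv_mul_mem {N : ℕ → Subgroup C} (hN : ∀ k, IsClosed (N k : Set C))
    (hNanti : Antitone N) {a : ℕ → C} (ha : ∀ k, (a k)⁻¹ * a (k + 1) ∈ N k) :
    ∃ d, ∀ k, (a k)⁻¹ * d ∈ N k := by
  let T : ℕ → Set C := fun k => ((a k)⁻¹ * ·) ⁻¹' (N k : Set C)
  have hT : ∀ k, T (k + 1) ⊆ T k := fun k y (hy : (a (k + 1))⁻¹ * y ∈ N (k + 1)) => by
    show (a k)⁻¹ * y ∈ N k
    have : (a k)⁻¹ * y = ((a k)⁻¹ * a (k + 1)) * ((a (k + 1))⁻¹ * y) := by group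
    rw [this]
    exact (N k).mul_mem (ha k) (hNanti k.le_succ hy)
  have hTclosed : ∀ k, IsClosed (T k) := fun k => (hN k).preimage (continuous_const_mul _)
  obtain ⟨d, hd⟩ := IsCompact.nonempty_iInter_of_sequence_nonempty_isCompact_isClosed T hT
    (fun k => ⟨a k, show (a k)⁻¹ * a k ∈ N k by simp⟩) (hTclosed 0).isCompact hTclosed
  exact ⟨d, Set.mem_iInter.mp hd⟩

end DenseSubgroups

section InfChain

variable {C : Type*} [Group C] [TopologicalSpace C] [IsTopologicalGroup C]
  {G : Subgroup C} {V : ℕ → Subgroup C} {D : Subgroup C}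

theorem coreIn_inf_chain (hG : Dense (G : Set C)) (hVopen : ∀ ℓ, IsOpen (V ℓ : Set C))
    (n ℓ : ℕ) : coreIn (G ⊓ V n) (G ⊓ V ℓ) = G ⊓ coreIn (V n) (V ℓ) :=
  coreIn_inf_of_dense hG (hVopen n) ((V ℓ).isClosed_of_isOpen (hVopen ℓ))

theorem coreIn_inf_le_coreIn (hG : Dense (G : Set C)) (hVopen : ∀ ℓ, IsOpen (V ℓ : Set C))
    (n ℓ : ℕ) : coreIn (G ⊓ V n) (G ⊓ V ℓ) ≤ coreIn (V n) (V ℓ) :=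
  (coreIn_inf_chain hG hVopen n ℓ).trans_le inf_le_right

variable [CompactSpace C]

noncomputable def infChainLevelEquiv (hG : Dense (G : Set C))
    (hVopen : ∀ ℓ, IsOpen (V ℓ : Set C)) (hV : Antitone V) (n k : ℕ) :
    Qgrp (fun ℓ => G ⊓ V ℓ) n (n + k) ≃* V n ⧸ (coreIn (V n) (V (n + k))).subgroupOf (V n) :=
  quotientSubgroupOfEquiv inf_le_right (coreIn_inf_le_coreIn hG hVopen n _)
    (fun _ hx hxN => (coreIn_inf_chain hG hVopen n _).ge ⟨hx.1, hxN⟩)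
    (fun _ hv => hG.exists_mem_inf_inv_mul_mem (isOpen_coreIn _ (hVopen _))
      ((coreIn_le _ _).trans (hV (Nat.le_add_right n k))) hv)

/-- The `k`-th coordinate of the comparison map from `D` to the discriminant group: `d` is sent
to the class of any `g ∈ G_n` with `g ∈ d · core_{V_n}(V_{n+k})`. -/
noncomputable def infChainComponent (hG : Dense (G : Set C))
    (hVopen : ∀ ℓ, IsOpen (V ℓ : Set C)) (hV : Antitone V) (hD : ⨅ ℓ, V ℓ = D) (n k : ℕ) :
    D →* Qgrp (fun ℓ => G ⊓ V ℓ) n (n + k) :=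
  (infChainLevelEquiv hG hVopen hV n k).symm.toMonoidHom.comp
    ((QuotientGroup.mk' _).comp (Subgroup.inclusion (hD ▸ iInf_le V n)))

theorem infChainComponent_eq_mk_iff (hG : Dense (G : Set C))
    (hVopen : ∀ ℓ, IsOpen (V ℓ : Set C)) (hV : Antitone V) (hD : ⨅ ℓ, V ℓ = D) (n k : ℕ)
    (d : D) (g : ↥(G ⊓ V n)) :
    infChainComponent hG hVopen hV hD n k d = QuotientGroup.mk g ↔
      (d : C)⁻¹ * g ∈ coreIn (V n) (V (n + k)) := by
  rw [infChainComponent, MonoidHom.comp_apply, MulEquiv.coe_toMonoidHom, MulEquiv.symm_apply_eq]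
  exact mk_eq_quotientSubgroupOfMap_mk_iff inf_le_right (coreIn_inf_le_coreIn hG hVopen n _) _ g

theorem infChainComponent_mem_disc (hG : Dense (G : Set C))
    (hVopen : ∀ ℓ, IsOpen (V ℓ : Set C)) (hV : Antitone V) (hD : ⨅ ℓ, V ℓ = D) (n : ℕ)
    (d : D) : (fun k => infChainComponent hG hVopen hV hD n k d) ∈
      Disc (fun ℓ => G ⊓ V ℓ) (inf_succ_le_inf hV) n := by
  refine ⟨fun k => ?_, fun k => ?_⟩
  · obtain ⟨g, hg, hdg⟩ := hG.exists_mem_inf_inv_mul_mem (isOpen_coreIn (V n) (hVopen (n + k)))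
      (coreIn_le _ _) ((hD ▸ iInf_le V (n + k) : D ≤ V (n + k)) d.2)
    refine Subgroup.mem_map.mpr ⟨⟨g, inf_le_inf_left G (hV (Nat.le_add_right n k)) hg⟩, hg, ?_⟩
    exact ((infChainComponent_eq_mk_iff hG hVopen hV hD n k d _).mpr hdg).symm
  · obtain ⟨g, hg⟩ := QuotientGroup.mk_surjective (infChainComponent hG hVopen hV hD n (k + 1) d)
    have hdg := (infChainComponent_eq_mk_iff hG hVopen hV hD n (k + 1) d g).mp hg.symm
    show bond _ _ n (n + k) (infChainComponent hG hVopen hV hD n (k + 1) d) =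
      infChainComponent hG hVopen hV hD n k d
    rw [← hg, (infChainComponent_eq_mk_iff hG hVopen hV hD n k d g).mpr
      (coreIn_mono (hV (Nat.le_succ _)) hdg)]
    rfl

noncomputable def infChainDiscHom (hG : Dense (G : Set C))
    (hVopen : ∀ ℓ, IsOpen (V ℓ : Set C)) (hV : Antitone V) (hD : ⨅ ℓ, V ℓ = D) (n : ℕ) :
    D →* Disc (fun ℓ => G ⊓ V ℓ) (inf_succ_le_inf hV) n :=
  (MonoidHom.pi fun k => infChainComponent hG hVopen hV hD n k).codRestrict _
    (infChainComponent_mem_disc hG hVopen hV hD n)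

theorem infChainDiscHom_injective (hG : Dense (G : Set C))
    (hVopen : ∀ ℓ, IsOpen (V ℓ : Set C)) (hV : Antitone V) (hD : ⨅ ℓ, V ℓ = D) (n : ℕ)
    (hDcore : coreIn (V n) D = ⊥) : Function.Injective (infChainDiscHom hG hVopen hV hD n) := by
  refine (injective_iff_map_eq_one _).mpr fun d hd => ?_
  have hdN : ∀ k, (d : C) ∈ coreIn (V n) (V (n + k)) := fun k => by
    have h1 : infChainComponent hG hVopen hV hD n k d = QuotientGroup.mk 1 :=
      congrFun (congrArg Subtype.val hd) k
    simpa using (infChainComponent_eq_mk_iff hG hVopen hV hD n k d 1).mp h1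
  have hd : (d : C) ∈ coreIn (V n) (⨅ k, V (n + k)) := by
    rw [coreIn_iInf, Subgroup.mem_iInf]
    exact hdN
  rw [hV.iInf_add_left n, hD, hDcore, Subgroup.mem_bot] at hd
  exact Subtype.ext hd

theorem continuous_infChainDiscHom (hG : Dense (G : Set C))
    (hVopen : ∀ ℓ, IsOpen (V ℓ : Set C)) (hV : Antitone V) (hD : ⨅ ℓ, V ℓ = D) (n : ℕ) :
    @Continuous _ _ _ (discTopology (fun ℓ => G ⊓ V ℓ) (inf_succ_le_inf hV) n)
      (infChainDiscHom hG hVopen hV hD n) := by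
  let _ : ∀ k, TopologicalSpace (Qgrp (fun ℓ => G ⊓ V ℓ) n (n + k)) := fun _ => ⊥
  have : ∀ k, DiscreteTopology (Qgrp (fun ℓ => G ⊓ V ℓ) n (n + k)) := fun _ => ⟨rfl⟩
  refine continuous_induced_rng.mpr (continuous_pi fun k => continuous_discrete_rng.mpr fun q => ?_)
  obtain ⟨g, rfl⟩ := QuotientGroup.mk_surjective q
  have hfiber : (infChainComponent hG hVopen hV hD n k ·) ⁻¹' {QuotientGroup.mk g} =
      {d : D | (d : C)⁻¹ * g ∈ coreIn (V n) (V (n + k))} :=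
    Set.ext fun d => infChainComponent_eq_mk_iff hG hVopen hV hD n k d g
  exact hfiber ▸ (isOpen_coreIn _ (hVopen _)).preimage (by fun_prop)

theorem infChainDiscHom_surjective (hG : Dense (G : Set C))
    (hVopen : ∀ ℓ, IsOpen (V ℓ : Set C)) (hV : Antitone V) (hD : ⨅ ℓ, V ℓ = D) (n : ℕ) :
    Function.Surjective (infChainDiscHom hG hVopen hV hD n) := by
  intro x
  obtain ⟨hximg, hxbond⟩ := x.2
  choose g hg hgx using fun k => Subgroup.mem_map.mp (hximg k)
  have hstep : ∀ k, ((g k : C))⁻¹ * g (k + 1) ∈ coreIn (V n) (V (n + k)) := fun k => by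
    have h := hxbond k
    rw [← hgx k, ← hgx (k + 1), QuotientGroup.mk'_apply, QuotientGroup.mk'_apply, bond_mk] at h
    exact coreIn_inf_le_coreIn hG hVopen n _
      (Subgroup.mem_subgroupOf.mp (QuotientGroup.eq.mp h.symm))
  obtain ⟨d, hd⟩ := exists_forall_inv_mul_mem
    (fun k => (coreIn (V n) (V (n + k))).isClosed_of_isOpen (isOpen_coreIn _ (hVopen _)))
    (fun _ _ hkl => coreIn_mono (hV (Nat.add_le_add_left hkl n))) hstep
  have hdD : d ∈ ⨅ k, V (n + k) := Subgroup.mem_iInf.mpr fun k => by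
    have : d = g k * ((g k : C)⁻¹ * d) := by group
    rw [this]
    exact (V (n + k)).mul_mem (hg k).2 (coreIn_le _ _ (hd k))
  rw [hV.iInf_add_left n, hD] at hdD
  refine ⟨⟨d, hdD⟩, Subtype.ext (funext fun k => ?_)⟩
  rw [← hgx k]
  exact (infChainComponent_eq_mk_iff hG hVopen hV hD n k _ _).mpr (by simpa using inv_mem (hd k))

end InfChain

theorem exists_continuous_mulEquiv_disc_infChain {C : Type*} [Group C] [TopologicalSpace C]
    [IsTopologicalGroup C] [CompactSpace C] {G D : Subgroup C} {V : ℕ → Subgroup C}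
    (hG : Dense (G : Set C)) (hVopen : ∀ ℓ, IsOpen (V ℓ : Set C)) (hV : Antitone V)
    (hD : ⨅ ℓ, V ℓ = D) (n : ℕ) (hDcore : coreIn (V n) D = ⊥) :
    ∃ e : D ≃* Disc (fun ℓ => G ⊓ V ℓ) (inf_succ_le_inf hV) n,
      @Continuous _ _ inferInstance (discTopology _ (inf_succ_le_inf hV) n) ⇑e ∧
      @Continuous _ _ (discTopology _ (inf_succ_le_inf hV) n) inferInstance ⇑e.symm := by
  have hDclosed : IsClosed (D : Set C) := by
    rw [← hD, Subgroup.coe_iInf]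
    exact isClosed_iInter fun ℓ => (V ℓ).isClosed_of_isOpen (hVopen ℓ)
  have : CompactSpace D := isCompact_iff_compactSpace.mp hDclosed.isCompact
  let e := MulEquiv.ofBijective (infChainDiscHom hG hVopen hV hD n)
    ⟨infChainDiscHom_injective hG hVopen hV hD n hDcore,
      infChainDiscHom_surjective hG hVopen hV hD n⟩
  have he := continuous_infChainDiscHom hG hVopen hV hD n
  exact ⟨e, he, @Continuous.continuous_symm_of_equiv_compact_to_t2 _ _ _
    (discTopology _ (inf_succ_le_inf hV) n) _ (t2Space_discTopology_s3 _ _ n) e.toEquiv he⟩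

/-- The subgroups `V₀ = C` and `V_ℓ = D U_ℓ` for `ℓ ≥ 1`, so that `G_ℓ = G ∩ V_ℓ`. -/
def lenstraLevels {C : Type*} [Group C] (D : Subgroup C) (U : ℕ → Subgroup C) :
    ℕ → Subgroup C
  | 0 => ⊤
  | ℓ + 1 => D ⊔ U (ℓ + 1)

section LenstraLevels

variable {C : Type*} [Group C] {D : Subgroup C} {U : ℕ → Subgroup C}

theorem lenstraLevels_antitone (hU : ∀ ℓ, U (ℓ + 1) ≤ U ℓ) : Antitone (lenstraLevels D U) :=
  antitone_nat_of_succ_le fun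
    | 0 => le_top
    | ℓ + 1 => sup_le_sup_left (hU (ℓ + 1)) D

variable [TopologicalSpace C] [IsTopologicalGroup C]

theorem isOpen_lenstraLevels (hU : ∀ ℓ, IsOpen (U ℓ : Set C)) :
    ∀ ℓ, IsOpen (lenstraLevels D U ℓ : Set C)
  | 0 => isOpen_univ
  | ℓ + 1 => Subgroup.isOpen_mono le_sup_right (hU (ℓ + 1))

theorem mem_of_forall_mem_sup [CompactSpace C] (hD : IsClosed (D : Set C))
    (hUopen : ∀ ℓ, IsOpen (U ℓ : Set C)) (hUnormal : ∀ ℓ, (U ℓ).Normal)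
    (hU : ∀ ℓ, U (ℓ + 1) ≤ U ℓ) (hUint : ⨅ ℓ, U ℓ = ⊥) {x : C} (hx : ∀ ℓ, x ∈ D ⊔ U ℓ) :
    x ∈ D := by
  let S : ℕ → Set C := fun ℓ => (D : Set C) ∩ (x⁻¹ * ·) ⁻¹' (U ℓ : Set C)
  have hS : ∀ ℓ, (S ℓ).Nonempty := fun ℓ => by
    obtain ⟨d, hd, u, hu, rfl⟩ := Subgroup.mem_sup_of_normal_right.mp (hx ℓ)
    exact ⟨d, hd, show (d * u)⁻¹ * d ∈ U ℓ by simpa using (U ℓ).inv_mem hu⟩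
  have hSclosed : ∀ ℓ, IsClosed (S ℓ) := fun ℓ =>
    hD.inter (((U ℓ).isClosed_of_isOpen (hUopen ℓ)).preimage (continuous_const_mul _))
  obtain ⟨d, hd⟩ := IsCompact.nonempty_iInter_of_sequence_nonempty_isCompact_isClosed S
    (fun ℓ _ hy => ⟨hy.1, hU ℓ hy.2⟩) hS (hSclosed 0).isCompact hSclosed
  have hxd : x⁻¹ * d ∈ ⨅ ℓ, U ℓ := Subgroup.mem_iInf.mpr fun ℓ => (Set.mem_iInter.mp hd ℓ).2
  rw [hUint, Subgroup.mem_bot, inv_mul_eq_one] at hxd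
  exact hxd ▸ (Set.mem_iInter.mp hd 0).1

theorem iInf_lenstraLevels [CompactSpace C] (hD : IsClosed (D : Set C))
    (hUopen : ∀ ℓ, IsOpen (U ℓ : Set C)) (hUnormal : ∀ ℓ, (U ℓ).Normal)
    (hU : ∀ ℓ, U (ℓ + 1) ≤ U ℓ) (hUint : ⨅ ℓ, U ℓ = ⊥) : ⨅ ℓ, lenstraLevels D U ℓ = D := by
  refine le_antisymm (fun x hx => mem_of_forall_mem_sup hD hUopen hUnormal hU hUint fun ℓ => ?_)
    (le_iInf fun | 0 => le_top | ℓ + 1 => le_sup_left)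
  exact sup_le_sup_left (hU ℓ) D (Subgroup.mem_iInf.mp hx (ℓ + 1))

end LenstraLevels

theorem lenstra_construction_stable_general
    {C : Type*} [Group C] [TopologicalSpace C] [IsTopologicalGroup C]
    [CompactSpace C]
    (G : Subgroup C) (hGdense : Dense (G : Set C))
    (D : Subgroup C) (hDclosed : IsClosed (D : Set C))
    (hDcore : ∀ U : Set C, IsClopen U → (1 : C) ∈ U →
      (⨅ k ∈ U, conjSub k D) = ⊥)
    (U : ℕ → Subgroup C)
    (hUopen : ∀ ℓ, IsOpen (U ℓ : Set C))
    (hUnormal : ∀ ℓ, (U ℓ).Normal)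
    (hUdec : ∀ ℓ, U (ℓ + 1) ≤ U ℓ)
    (hUint : (⨅ ℓ : ℕ, U ℓ) = ⊥)
    (Gl : ℕ → Subgroup C)
    (hGl0 : Gl 0 = G)
    (hGldef : ∀ ℓ, 1 ≤ ℓ → Gl ℓ = G ⊓ (D ⊔ U ℓ)) :
    ∃ hdesc : ∀ ℓ, Gl (ℓ + 1) ≤ Gl ℓ,
      (∀ ℓ, ((Gl ℓ).subgroupOf G).FiniteIndex) ∧
      ∀ n : ℕ, ∃ e : ↥D ≃* ↥(Disc Gl hdesc n),
        @Continuous _ _ inferInstance (discTopology Gl hdesc n) ⇑e ∧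
        @Continuous _ _ (discTopology Gl hdesc n) inferInstance ⇑e.symm := by
  have hVopen := isOpen_lenstraLevels (D := D) hUopen
  have hV := lenstraLevels_antitone (D := D) hUdec
  obtain rfl : Gl = fun ℓ => G ⊓ lenstraLevels D U ℓ := funext fun
    | 0 => hGl0.trans (inf_top_eq G).symm
    | ℓ + 1 => hGldef (ℓ + 1) ℓ.succ_pos
  refine ⟨inf_succ_le_inf hV, fun ℓ => finiteIndex_inf_subgroupOf G (hVopen ℓ), fun n => ?_⟩
  refine exists_continuous_mulEquiv_disc_infChain hGdense hVopen hV
    (iInf_lenstraLevels hDclosed hUopen hUnormal hUdec hUint) n ?_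
  rw [coreIn_eq_biInf_conjSub]
  exact hDcore _ ⟨(lenstraLevels D U n).isClosed_of_isOpen (hVopen n), hVopen n⟩
    (Subgroup.one_mem _)

/-- **Proposition 9.5.** Let `C` be a profinite group, `G ⊆ C` a finitely generated dense
subgroup, and `D ⊆ C` a closed subgroup of infinite index such that
`⋂_{k ∈ U} k D k⁻¹ = {e}` for every clopen neighborhood `U` of the identity in `C`.
Choose a decreasing sequence `{U_ℓ}` of open normal subgroups of `C` with `⋂_ℓ U_ℓ = {e}`,
and set `G_0 = G`, `G_ℓ = G ∩ (D·U_ℓ)` for `ℓ ≥ 1` (here `D·U_ℓ = D ⊔ U_ℓ`, since `U_ℓ` is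
normal).  Then `{G_ℓ}` is a group chain in `G` and for every `n` the discriminant group of
the truncated chain `{G_ℓ}_{ℓ ≥ n}` is isomorphic to `D` as a topological group; in
particular the chain is stable with constant discriminant group `D`. -/
theorem lenstra_construction_stable
    {C : Type*} [Group C] [TopologicalSpace C] [IsTopologicalGroup C]
    [CompactSpace C] [T2Space C] [TotallyDisconnectedSpace C]
    (G : Subgroup C) (hGfg : Group.FG ↥G) (hGdense : Dense (G : Set C))
    (D : Subgroup C) (hDclosed : IsClosed (D : Set C)) (hDindex : D.index = 0)
    (hDcore : ∀ U : Set C, IsClopen U → (1 : C) ∈ U →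
      (⨅ k ∈ U, conjSub k D) = ⊥)
    (U : ℕ → Subgroup C)
    (hUopen : ∀ ℓ, IsOpen (U ℓ : Set C))
    (hUnormal : ∀ ℓ, (U ℓ).Normal)
    (hUdec : ∀ ℓ, U (ℓ + 1) ≤ U ℓ)
    (hUint : (⨅ ℓ : ℕ, U ℓ) = ⊥)
    (Gl : ℕ → Subgroup C)
    (hGl0 : Gl 0 = G)
    (hGldef : ∀ ℓ, 1 ≤ ℓ → Gl ℓ = G ⊓ (D ⊔ U ℓ)) :
    ∃ hdesc : ∀ ℓ, Gl (ℓ + 1) ≤ Gl ℓ,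
      (∀ ℓ, ((Gl ℓ).subgroupOf G).FiniteIndex) ∧
      ∀ n : ℕ, ∃ e : ↥D ≃* ↥(Disc Gl hdesc n),
        @Continuous _ _ inferInstance (discTopology Gl hdesc n) ⇑e ∧
        @Continuous _ _ (discTopology Gl hdesc n) inferInstance ⇑e.symm :=
  lenstra_construction_stable_general G hGdense D hDclosed hDcore U hUopen hUnormal hUdec hUint Gl
    hGl0 hGldef
end

section
/- Let {G_ℓ}_{ℓ≥0} be a descending chain of subgroups of a group G₀ with kernel K = ⋂_{ℓ≥0} G_ℓ. Suppose there exists g ∈ K such that for every n ≥ 0 there is h ∈ G_n with h⁻¹ g h ∉ K (i.e. g has non-trivial germinal holonomy). Then for every n ≥ 0 there exists ℓ ≥ n with g ∉ E_{n,ℓ}, and the sequence (g·E_{n,ℓ})_{ℓ≥n} is a well-defined non-identity element of the discriminant group D^n = lim←_{ℓ≥n} G_ℓ/E_{n,ℓ}; in particular D^n is a non-trivial group for every n ≥ 0. -/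
section DiscriminantElements

variable {Γ : Type*} [Group Γ]

theorem exists_notMem_coreIn {G : ℕ → Subgroup Γ} (hG : Antitone G) {H : Subgroup Γ}
    {g h : Γ} (hh : h ∈ H) (hg : h⁻¹ * g * h ∉ ⨅ ℓ, G ℓ) (n : ℕ) :
    ∃ ℓ, n ≤ ℓ ∧ g ∉ coreIn H (G ℓ) := by
  obtain ⟨ℓ, hℓ⟩ : ∃ ℓ, h⁻¹ * g * h ∉ G ℓ := by
    simpa only [Subgroup.mem_iInf, not_forall] using hg
  refine ⟨max n ℓ, le_max_left n ℓ, fun hcore => hℓ ?_⟩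
  exact hG (le_max_right n ℓ) (mem_coreIn.mp hcore h hh)

/-- The sequence of cosets `(x·E_{n,ℓ})_{ℓ ≥ n}`, indexed by `ℓ - n`. -/
def cosetSeq (G : ℕ → Subgroup Γ) (n : ℕ) (x : G n) : ∀ ℓ : ℕ, Qgrp G n (n + ℓ) :=
  fun _ => QuotientGroup.mk x

theorem cosetSeq_mem_disc {G : ℕ → Subgroup Γ} (hG : ∀ ℓ, G (ℓ + 1) ≤ G ℓ) {n : ℕ}
    {x : G n} (hx : ∀ ℓ, (x : Γ) ∈ G (n + ℓ)) : cosetSeq G n x ∈ Disc G hG n :=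
  ⟨fun ℓ => ⟨x, Subgroup.mem_subgroupOf.mpr (hx ℓ), rfl⟩, fun _ => rfl⟩

theorem cosetSeq_eq_one_iff {G : ℕ → Subgroup Γ} {n : ℕ} {x : G n} :
    cosetSeq G n x = 1 ↔ ∀ ℓ, (x : Γ) ∈ coreIn (G n) (G (n + ℓ)) := by
  simp only [funext_iff, cosetSeq, Pi.one_apply, QuotientGroup.eq_one_iff,
    Subgroup.mem_subgroupOf]

theorem cosetSeq_ne_one {G : ℕ → Subgroup Γ} {n ℓ : ℕ} {x : G n} (hnℓ : n ≤ ℓ)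
    (hx : (x : Γ) ∉ coreIn (G n) (G ℓ)) : cosetSeq G n x ≠ 1 := by
  obtain ⟨k, rfl⟩ := Nat.exists_eq_add_of_le hnℓ
  exact fun h => hx (cosetSeq_eq_one_iff.mp h k)

end DiscriminantElements

/-- **Theorem 1.8 / Proposition 7.10.** Let `{G_ℓ}_{ℓ ≥ 0}` be a descending chain of
subgroups of `G₀` with kernel `K = ⋂_ℓ G_ℓ`, and let `g ∈ K` have non-trivial germinal
holonomy: for every `n` there is `h ∈ G_n` with `h⁻¹ g h ∉ K`.  Then for every `n` there
is `ℓ ≥ n` with `g ∉ E_{n,ℓ}`, and the sequence of cosets `(g·E_{n,ℓ})_ℓ` is a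
well-defined non-identity element of the discriminant group
`D^n = lim←_{ℓ ≥ n} G_ℓ/E_{n,ℓ}`; in particular `D^n` is non-trivial for every `n`. -/
theorem nontrivial_holonomy_nontrivial_discriminant
    {G₀ : Type*} [Group G₀] (Gc : ℕ → Subgroup G₀)
    (hdesc : ∀ ℓ, Gc (ℓ + 1) ≤ Gc ℓ)
    (g : G₀) (hgK : g ∈ (⨅ ℓ : ℕ, Gc ℓ))
    (hhol : ∀ n : ℕ, ∃ h ∈ Gc n, h⁻¹ * g * h ∉ (⨅ ℓ : ℕ, Gc ℓ)) :
    ∀ n : ℕ,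
      (∃ ℓ : ℕ, n ≤ ℓ ∧ g ∉ coreIn (Gc n) (Gc ℓ)) ∧
      (fun ℓ : ℕ => (QuotientGroup.mk (⟨g, Subgroup.mem_iInf.mp hgK n⟩ : ↥(Gc n)) :
          Qgrp Gc n (n + ℓ))) ∈ Disc Gc hdesc n ∧
      (fun ℓ : ℕ => (QuotientGroup.mk (⟨g, Subgroup.mem_iInf.mp hgK n⟩ : ↥(Gc n)) :
          Qgrp Gc n (n + ℓ))) ≠ 1 ∧
      Nontrivial ↥(Disc Gc hdesc n) := by
  intro n
  have hg : ∀ ℓ, g ∈ Gc ℓ := Subgroup.mem_iInf.mp hgK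
  obtain ⟨h, hh, hconj⟩ := hhol n
  obtain ⟨ℓ, hnℓ, hgℓ⟩ := exists_notMem_coreIn (antitone_nat_of_succ_le hdesc) hh hconj n
  have hmem : cosetSeq Gc n ⟨g, hg n⟩ ∈ Disc Gc hdesc n :=
    cosetSeq_mem_disc hdesc fun k => hg (n + k)
  have hne : cosetSeq Gc n ⟨g, hg n⟩ ≠ 1 := cosetSeq_ne_one hnℓ hgℓ
  refine ⟨⟨ℓ, hnℓ, hgℓ⟩, hmem, hne, ?_⟩
  exact nontrivial_of_ne ⟨_, hmem⟩ 1 fun h1 => hne (congrArg Subtype.val h1)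
end

section
/- Let a group G act by homeomorphisms on a Hausdorff topological space X, and suppose the action is minimal, i.e. every G-orbit is dense in X. Suppose there exists a point x ∈ X whose isotropy subgroup Stab_G(x) = {g ∈ G : g·x = x} is a normal subgroup of G. Then every g ∈ G that acts as the identity on some non-empty open subset of X acts as the identity on all of X; that is, the action is strongly quasi-analytic (SQA). -/
/-!
If `g` is the identity on a non-empty open set `U`, then `g` fixes a point `h • x` of the dense
orbit of `x` lying in `U`, so `g` lies in `Stab(h • x) = h Stab(x) h⁻¹ = Stab(x)`. A normal
stabilizer is the stabilizer of every point of the orbit, so `g` fixes the whole orbit of `x`;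
being continuous, it then agrees with the identity on the closure of that dense orbit.
-/

namespace MulAction

variable {G α : Type*} [Group G] [MulAction G α] {a b : α}

theorem stabilizer_smul_eq_of_normal (hnormal : (stabilizer G a).Normal) (g : G) :
    stabilizer G (g • a) = stabilizer G a := by
  rw [stabilizer_smul_eq_stabilizer_map_conj]
  exact Subgroup.normal_iff_map_conj_eq.mp hnormal g

theorem stabilizer_eq_of_mem_orbit_of_normal (hnormal : (stabilizer G a).Normal)
    (hb : b ∈ orbit G a) : stabilizer G b = stabilizer G a := by
  obtain ⟨g, rfl⟩ := hb
  exact stabilizer_smul_eq_of_normal hnormal g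

end MulAction

open MulAction

/-- Let a group `G` act by homeomorphisms on a Hausdorff space `X`, with every orbit
dense (a minimal action).  Suppose some point `x` has normal isotropy subgroup
`Stab_G(x) ⊴ G`.  Then every `g ∈ G` acting as the identity on some non-empty open
subset of `X` acts as the identity on all of `X`: the action is SQA. -/
theorem sqa_of_normal_stabilizer
    {G X : Type*} [Group G] [TopologicalSpace X] [T2Space X] [MulAction G X]
    (hcont : ∀ g : G, Continuous fun y : X => g • y)
    (hmin : ∀ x : X, Dense (MulAction.orbit G x))
    (x : X) (hnormal : (MulAction.stabilizer G x).Normal) :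
    ∀ g : G, (∃ U : Set X, IsOpen U ∧ U.Nonempty ∧ ∀ y ∈ U, g • y = y) →
      ∀ y : X, g • y = y := by
  rintro g ⟨U, hU, hUne, hfix⟩
  obtain ⟨z, hz_orbit, hzU⟩ := (hmin x).exists_mem_open hU hUne
  have hg : g ∈ stabilizer G x := by
    rw [← stabilizer_eq_of_mem_orbit_of_normal hnormal hz_orbit]
    exact hfix z hzU
  have hg_orbit : Set.EqOn (fun y => g • y) id (orbit G x) := fun y hy => by
    rw [← stabilizer_eq_of_mem_orbit_of_normal hnormal hy] at hg
    exact hg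
  exact congrFun (Continuous.ext_on (hmin x) (hcont g) continuous_id hg_orbit)
end

section
/- Let G be a finitely generated group acting minimally and equicontinuously by homeomorphisms on a Cantor space X, i.e. every G-orbit is dense and the family of homeomorphisms {x ↦ g·x : g ∈ G} is equicontinuous with respect to the unique uniform structure of the compact space X. Suppose x, y ∈ X are points at which the germinal holonomy is locally trivial: there exist open sets U ∋ x and V ∋ y such that every g ∈ Stab_G(x) acts as the identity on U and every g ∈ Stab_G(y) acts as the identity on V. Then the isotropy subgroups Stab_G(x) and Stab_G(y) are conjugate subgroups of G. -/
/-!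
Equicontinuity at `y` and density of the orbit of `x` give `h ∈ G` with `h • x` close to `y`
and `h⁻¹ • y` close to `x`, inside the neighbourhoods `V` and `U` on which the isotropy
groups act trivially. Then `Stab(y)` fixes `h • x`, while `Stab(x)` fixes `h⁻¹ • y`, i.e.
`Stab(h • x)` fixes `y`; hence `Stab(y) = Stab(h • x) = h Stab(x) h⁻¹`.
-/

open Filter Topology MulAction

theorem MulAction.stabilizer_smul_le_of_le_stabilizer_inv_smul {G α : Type*} [Group G]
    [MulAction G α] {x y : α} (h : G) (hle : stabilizer G x ≤ stabilizer G (h⁻¹ • y)) :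
    stabilizer G (h • x) ≤ stabilizer G y := by
  have hconj := Subgroup.map_mono (f := (MulAut.conj h).toMonoidHom) hle
  rwa [← stabilizer_smul_eq_stabilizer_map_conj, ← stabilizer_smul_eq_stabilizer_map_conj,
    smul_inv_smul] at hconj

theorem MulAction.exists_smul_mem_and_inv_smul_mem {G X : Type*} [Group G] [UniformSpace X]
    [MulAction G X] {x y : X} {U V : Set X}
    (hequi : EquicontinuousAt (fun g : G => fun z : X => g • z) y)
    (hdense : Dense (orbit G x)) (hU : U ∈ 𝓝 x) (hV : V ∈ 𝓝 y) :
    ∃ h : G, h • x ∈ V ∧ h⁻¹ • y ∈ U := by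
  rw [nhds_eq_comap_uniformity', mem_comap] at hU
  obtain ⟨E, hE, hEU⟩ := hU
  have hnear : ∀ᶠ z in 𝓝 y, z ∈ V ∧ ∀ g : G, (g • y, g • z) ∈ E :=
    (eventually_mem_set.mpr hV).and (hequi E hE)
  obtain ⟨_, ⟨hzV, hzE⟩, h, rfl⟩ := mem_closure_iff_nhds.mp (hdense y) _ hnear
  refine ⟨h, hzV, hEU ?_⟩
  simpa only [Set.mem_preimage, inv_smul_smul] using hzE h⁻¹

theorem conjugate_kernels_of_locally_trivial_holonomy_general
    {G X : Type*} [Group G] [UniformSpace X]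
    [MulAction G X]
    (hmin : ∀ z : X, Dense (MulAction.orbit G z))
    (hequi : Equicontinuous fun g : G => fun z : X => g • z)
    (x y : X)
    (hx : ∃ U : Set X, IsOpen U ∧ x ∈ U ∧
      ∀ g ∈ MulAction.stabilizer G x, ∀ z ∈ U, g • z = z)
    (hy : ∃ V : Set X, IsOpen V ∧ y ∈ V ∧
      ∀ g ∈ MulAction.stabilizer G y, ∀ z ∈ V, g • z = z) :
    ∃ h : G, MulAction.stabilizer G y =
      (MulAction.stabilizer G x).map (MulAut.conj h).toMonoidHom := by
  obtain ⟨U, hUopen, hxU, hUfix⟩ := hx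
  obtain ⟨V, hVopen, hyV, hVfix⟩ := hy
  obtain ⟨h, hhx, hhy⟩ := exists_smul_mem_and_inv_smul_mem (hequi y) (hmin x)
    (hUopen.mem_nhds hxU) (hVopen.mem_nhds hyV)
  refine ⟨h, ?_⟩
  rw [← stabilizer_smul_eq_stabilizer_map_conj]
  exact le_antisymm (fun g hg => hVfix g hg _ hhx)
    (stabilizer_smul_le_of_le_stabilizer_inv_smul h fun g hg => hUfix g hg _ hhy)

/-- **Proposition 7.7.** Let a finitely generated group `G` act minimally and
equicontinuously by homeomorphisms on a Cantor space `X` (non-empty, compact,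
metrizable, perfect, totally disconnected).  If `x, y ∈ X` are points at which the
germinal holonomy is locally trivial, then `Stab_G(x)` and `Stab_G(y)` are conjugate
subgroups of `G`. -/
theorem conjugate_kernels_of_locally_trivial_holonomy
    {G X : Type*} [Group G] [UniformSpace X] [CompactSpace X] [T2Space X]
    [TotallyDisconnectedSpace X] [Nonempty X] [TopologicalSpace.MetrizableSpace X]
    [MulAction G X]
    (hperf : Perfect (Set.univ : Set X))
    (hfg : Group.FG G)
    (hcont : ∀ g : G, Continuous fun z : X => g • z)
    (hmin : ∀ z : X, Dense (MulAction.orbit G z))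
    (hequi : Equicontinuous fun g : G => fun z : X => g • z)
    (x y : X)
    (hx : ∃ U : Set X, IsOpen U ∧ x ∈ U ∧
      ∀ g ∈ MulAction.stabilizer G x, ∀ z ∈ U, g • z = z)
    (hy : ∃ V : Set X, IsOpen V ∧ y ∈ V ∧
      ∀ g ∈ MulAction.stabilizer G y, ∀ z ∈ V, g • z = z) :
    ∃ h : G, MulAction.stabilizer G y =
      (MulAction.stabilizer G x).map (MulAut.conj h).toMonoidHom :=
  conjugate_kernels_of_locally_trivial_holonomy_general hmin hequi x y hx hy
end

section
/- Let {G_ℓ}_{ℓ≥0} be a descending chain of subgroups of a group G₀ with kernel K = ⋂_{ℓ≥0} G_ℓ. Suppose K is finitely generated and that every g ∈ K has trivial germinal holonomy, i.e. for every g ∈ K there exists an index i_g ≥ 0 such that h⁻¹ g h ∈ K for all h ∈ G_{i_g}. Then there exists an index ℓ_x ≥ 0 such that K is a normal subgroup of G_{ℓ_x}. -/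
open Filter

/-!
Conjugation by `h` is an automorphism, so it maps `K = closure S` into `K` as soon as it maps
the finite generating set `S` into `K`. Along a descending chain, each generator is conjugated
into `K` by every element of `G_ℓ` for all large `ℓ`; finitely many such conditions hold
simultaneously from some index `ℓ_x` on.
-/

namespace Subgroup

variable {G : Type*} [Group G]

theorem conj_mem_of_forall_conj_mem_closure {S : Set G} {K : Subgroup G} {h : G}
    (hS : ∀ s ∈ S, h * s * h⁻¹ ∈ K) {g : G} (hg : g ∈ closure S) : h * g * h⁻¹ ∈ K := by
  have hmap : (closure S).map (MulAut.conj h).toMonoidHom ≤ K := by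
    rw [MonoidHom.map_closure, closure_le]
    rintro _ ⟨s, hs, rfl⟩
    exact hS s hs
  exact hmap ⟨g, hg, rfl⟩

theorem FG.eventually_forall_conj_mem {ι : Type*} {l : Filter ι} {K : Subgroup G} (hK : K.FG)
    {H : ι → Set G} (hev : ∀ g ∈ K, ∀ᶠ i in l, ∀ h ∈ H i, h * g * h⁻¹ ∈ K) :
    ∀ᶠ i in l, ∀ h ∈ H i, ∀ g ∈ K, h * g * h⁻¹ ∈ K := by
  obtain ⟨S, rfl⟩ := hK
  have hgen : ∀ᶠ i in l, ∀ s ∈ S, ∀ h ∈ H i, h * s * h⁻¹ ∈ closure (S : Set G) :=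
    (eventually_all_finset S).2 fun s hs => hev s (subset_closure hs)
  filter_upwards [hgen] with i hi h hh g hg
  exact conj_mem_of_forall_conj_mem_closure (fun s hs => hi s hs h hh) hg

end Subgroup

/-- **Proposition 7.9.** Let `{G_ℓ}_{ℓ ≥ 0}` be a descending chain of subgroups of a
group `G₀` with kernel `K = ⋂_ℓ G_ℓ`.  Suppose `K` is finitely generated, and every
`g ∈ K` has trivial germinal holonomy: there is an index `i_g` with `h⁻¹ g h ∈ K` for
all `h ∈ G_{i_g}`.  Then there is an index `ℓ_x` such that `K` is a normal subgroup of
`G_{ℓ_x}`. -/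
theorem kernel_normal_of_finitely_generated
    {G₀ : Type*} [Group G₀] (Gc : ℕ → Subgroup G₀)
    (hdesc : ∀ ℓ, Gc (ℓ + 1) ≤ Gc ℓ)
    (hfg : (⨅ ℓ : ℕ, Gc ℓ).FG)
    (hhol : ∀ g ∈ (⨅ ℓ : ℕ, Gc ℓ), ∃ i : ℕ,
      ∀ h ∈ Gc i, h⁻¹ * g * h ∈ (⨅ ℓ : ℕ, Gc ℓ)) :
    ∃ lx : ℕ, (⨅ ℓ : ℕ, Gc ℓ) ≤ Gc lx ∧
      ∀ h ∈ Gc lx, ∀ g ∈ (⨅ ℓ : ℕ, Gc ℓ), h * g * h⁻¹ ∈ (⨅ ℓ : ℕ, Gc ℓ) := by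
  have hanti : Antitone Gc := antitone_nat_of_succ_le hdesc
  have hev : ∀ g ∈ ⨅ ℓ, Gc ℓ, ∀ᶠ ℓ in atTop, ∀ h ∈ (Gc ℓ : Set G₀), h * g * h⁻¹ ∈ ⨅ ℓ, Gc ℓ := by
    intro g hg
    obtain ⟨i, hi⟩ := hhol g hg
    refine eventually_atTop.2 ⟨i, fun ℓ hℓ h hh => ?_⟩
    simpa using hi h⁻¹ (inv_mem (hanti hℓ hh))
  obtain ⟨lx, hlx⟩ := (hfg.eventually_forall_conj_mem hev).exists
  exact ⟨lx, iInf_le Gc lx, hlx⟩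
end

section
/- Let G₀ be a finitely generated group and let {G_ℓ}_{ℓ≥0} and {H_ℓ}_{ℓ≥0} be group chains in G₀ with H₀ = G₀. Let G_∞ = lim←{G₀/G_{ℓ+1} → G₀/G_ℓ} and H_∞ = lim←{G₀/H_{ℓ+1} → G₀/H_ℓ} with the left G₀-actions by coordinatewise multiplication. Then the chains {G_ℓ} and {H_ℓ} are equivalent if and only if there exists a G₀-equivariant homeomorphism τ : G_∞ → H_∞ with τ((e G_ℓ)_ℓ) = (e H_ℓ)_ℓ. -/
/-!
An interleaving `G_{ℓ_k} ⊇ H_{j_k} ⊇ G_{ℓ_{k+1}}` gives two reindexing maps between the inverse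
limits, each a composite of the natural coset maps; they are continuous, equivariant, fix the
basepoints, and are mutually inverse by the compatibility of the coordinates.

Conversely, a continuous map into the discrete space `Γ ⧸ H_n` depends only on finitely many
coordinates, hence, near the basepoint, only on the `m`-th coordinate for any large `m`. The
points `g · (e G_ℓ)_ℓ` with `g ∈ G_m` share that coordinate with the basepoint, so by
equivariance `g H_n = H_n`, i.e. `G_m ≤ H_n`. Applying this to `τ` and `τ⁻¹` and alternating
produces the interleaving subsequences.
-/

variable {Γ : Type*} [Group Γ]

/-- Discrete topology on each coset space `Γ ⧸ H` (the coset spaces occurring below are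
finite, since the subgroups have finite index). -/
instance cosetSpaceTopology (H : Subgroup Γ) : TopologicalSpace (Γ ⧸ H) := ⊥

/-- The natural map of coset spaces `Γ ⧸ H → Γ ⧸ K` for `H ≤ K`. -/
def cosetMap (H K : Subgroup Γ) (h : H ≤ K) : Γ ⧸ H → Γ ⧸ K :=
  Quotient.map' id fun a b hab => by
    rw [QuotientGroup.leftRel_apply] at hab ⊢
    exact h hab

/-- The inverse limit `G_∞ = lim← Γ/G_ℓ` of the coset spaces of a group chain,
as the subspace of compatible sequences in `Π_ℓ Γ/G_ℓ`. -/
def InvLimSet (G : ℕ → Subgroup Γ) (hG : ∀ ℓ, G (ℓ + 1) ≤ G ℓ) :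
    Set (∀ ℓ : ℕ, Γ ⧸ G ℓ) :=
  { x | ∀ ℓ, cosetMap (G (ℓ + 1)) (G ℓ) (hG ℓ) (x (ℓ + 1)) = x ℓ }

theorem cosetMap_smul (H K : Subgroup Γ) (h : H ≤ K) (g : Γ) (q : Γ ⧸ H) :
    cosetMap H K h (g • q) = g • cosetMap H K h q := by
  induction q using Quotient.inductionOn' with
  | h a => rfl

/-- The coordinatewise left action of `Γ` on the inverse limit `lim← Γ/G_ℓ`. -/
def limSMul (G : ℕ → Subgroup Γ) (hG : ∀ ℓ, G (ℓ + 1) ≤ G ℓ) (g : Γ)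
    (x : ↥(InvLimSet G hG)) : ↥(InvLimSet G hG) :=
  ⟨fun ℓ => g • x.1 ℓ, fun ℓ => by
    rw [cosetMap_smul, x.2 ℓ]⟩

/-- The basepoint `(e G_ℓ)_ℓ` of the inverse limit. -/
def basePt (G : ℕ → Subgroup Γ) (hG : ∀ ℓ, G (ℓ + 1) ≤ G ℓ) : ↥(InvLimSet G hG) :=
  ⟨fun _ => QuotientGroup.mk 1, fun _ => rfl⟩

/-- Two group chains `{G_ℓ}` and `{H_ℓ}` are equivalent if they admit interleaved
subsequences: there are strictly increasing `(ℓ_k)`, `(j_k)` with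
`G_{ℓ_0} ⊇ H_{j_0} ⊇ G_{ℓ_1} ⊇ H_{j_1} ⊇ ⋯`. -/
def ChainEquiv (G H : ℕ → Subgroup Γ) : Prop :=
  ∃ l j : ℕ → ℕ, StrictMono l ∧ StrictMono j ∧
    (∀ k, H (j k) ≤ G (l k)) ∧ (∀ k, G (l (k + 1)) ≤ H (j k))

open Filter

instance (H : Subgroup Γ) : DiscreteTopology (Γ ⧸ H) := ⟨rfl⟩

theorem cosetMap_cosetMap {A B C : Subgroup Γ} (hAB : A ≤ B) (hBC : B ≤ C) (q : Γ ⧸ A) :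
    cosetMap B C hBC (cosetMap A B hAB q) = cosetMap A C (hAB.trans hBC) q := by
  induction q using Quotient.inductionOn' with
  | h a => rfl

theorem cosetMap_self {A : Subgroup Γ} (h : A ≤ A) (q : Γ ⧸ A) : cosetMap A A h q = q := by
  induction q using Quotient.inductionOn' with
  | h a => rfl

section InverseLimit

variable {G H : ℕ → Subgroup Γ} {hG : ∀ ℓ, G (ℓ + 1) ≤ G ℓ} {hH : ∀ ℓ, H (ℓ + 1) ≤ H ℓ}

theorem cosetMap_val_of_le (x : InvLimSet G hG) {a b : ℕ} (hab : a ≤ b) :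
    cosetMap (G b) (G a) (antitone_nat_of_succ_le hG hab) (x.1 b) = x.1 a := by
  induction b, hab using Nat.le_induction with
  | base => exact cosetMap_self _ _
  | succ b hab ih => rw [← ih, ← x.2 b, cosetMap_cosetMap]

theorem continuous_val_apply (ℓ : ℕ) : Continuous fun x : InvLimSet G hG => x.1 ℓ :=
  (continuous_apply ℓ).comp continuous_subtype_val

theorem limSMul_one (x : InvLimSet G hG) : limSMul G hG 1 x = x :=
  Subtype.ext <| funext fun _ => one_smul _ _

theorem limSMul_basePt_apply_eq_iff (g : Γ) (ℓ : ℕ) :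
    (limSMul G hG g (basePt G hG)).1 ℓ = (basePt G hG).1 ℓ ↔ g ∈ G ℓ := by
  change (QuotientGroup.mk (g * 1) : Γ ⧸ G ℓ) = QuotientGroup.mk 1 ↔ _
  rw [QuotientGroup.eq, mul_one, mul_one, inv_mem_iff]

theorem eventually_forall_val_apply_eq_imp {X : Type*} [TopologicalSpace X] [DiscreteTopology X]
    {φ : InvLimSet G hG → X} (hφ : Continuous φ) (x : InvLimSet G hG) :
    ∀ᶠ m in atTop, ∀ y : InvLimSet G hG, y.1 m = x.1 m → φ y = φ x := by
  obtain ⟨W, hW, hWφ⟩ := isOpen_induced_iff.mp ((isOpen_discrete {φ x}).preimage hφ)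
  have hxW : x.1 ∈ W := by
    change x ∈ Subtype.val ⁻¹' W
    rw [hWφ]
    rfl
  obtain ⟨I, u, hu, hIW⟩ := isOpen_pi_iff.mp hW _ hxW
  refine eventually_atTop.2 ⟨I.sup id, fun m hm y hy => ?_⟩
  suffices y.1 ∈ W by
    change y ∈ φ ⁻¹' {φ x}
    rw [← hWφ]
    exact this
  refine hIW fun i hi => ?_
  have him : i ≤ m := (Finset.le_sup (f := id) hi).trans hm
  rw [← cosetMap_val_of_le y him, hy, cosetMap_val_of_le x him]
  exact (hu i hi).2

theorem exists_lt_le_of_continuous (f : InvLimSet G hG → InvLimSet H hH) (hf : Continuous f)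
    (horbit : ∀ g, f (limSMul G hG g (basePt G hG)) = limSMul H hH g (basePt H hH)) (n : ℕ) :
    ∃ m, n < m ∧ G m ≤ H n := by
  have hbase : f (basePt G hG) = basePt H hH := by simpa only [limSMul_one] using horbit 1
  obtain ⟨m, hloc, hm⟩ := ((eventually_forall_val_apply_eq_imp
    ((continuous_val_apply n).comp hf) (basePt G hG)).and (eventually_gt_atTop n)).exists
  refine ⟨m, hm, fun g hg => ?_⟩
  have := hloc _ ((limSMul_basePt_apply_eq_iff g m).2 hg)
  simp only [Function.comp_apply, horbit, hbase] at this
  exact (limSMul_basePt_apply_eq_iff g n).1 this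

theorem chainEquiv_of_forall_exists_lt_le (hGH : ∀ n, ∃ m, n < m ∧ G m ≤ H n)
    (hHG : ∀ n, ∃ m, n < m ∧ H m ≤ G n) : ChainEquiv G H := by
  choose φ hφlt hφle using hGH
  choose ψ hψlt hψle using hHG
  set l : ℕ → ℕ := fun k => (φ ∘ ψ)^[k] 0
  have hl : ∀ k, l (k + 1) = φ (ψ (l k)) := fun k => Function.iterate_succ_apply' _ _ _
  refine ⟨l, ψ ∘ l, strictMono_nat_of_lt_succ fun k => ?_, strictMono_nat_of_lt_succ fun k => ?_,
    fun k => hψle (l k), fun k => ?_⟩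
  · rw [hl]
    exact (hψlt _).trans (hφlt _)
  · simp only [Function.comp_apply, hl]
    exact (hφlt _).trans (hψlt _)
  · rw [hl]
    exact hφle _

def invLimMap (s : ℕ → ℕ) (hs : Monotone s) (hsub : ∀ ℓ, G (s ℓ) ≤ H ℓ) (x : InvLimSet G hG) :
    InvLimSet H hH :=
  ⟨fun ℓ => cosetMap _ _ (hsub ℓ) (x.1 (s ℓ)), fun ℓ => by
    dsimp only
    rw [cosetMap_cosetMap, ← cosetMap_val_of_le x (hs ℓ.le_succ), cosetMap_cosetMap]⟩

theorem continuous_invLimMap (s : ℕ → ℕ) (hs : Monotone s) (hsub : ∀ ℓ, G (s ℓ) ≤ H ℓ) :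
    Continuous (invLimMap (hG := hG) (hH := hH) s hs hsub) :=
  continuous_pi (fun ℓ => continuous_of_discreteTopology.comp (continuous_val_apply (s ℓ)))
    |>.subtype_mk _

theorem invLimMap_limSMul (s : ℕ → ℕ) (hs : Monotone s) (hsub : ∀ ℓ, G (s ℓ) ≤ H ℓ) (g : Γ)
    (x : InvLimSet G hG) :
    invLimMap (hH := hH) s hs hsub (limSMul G hG g x) = limSMul H hH g (invLimMap s hs hsub x) :=
  Subtype.ext <| funext fun ℓ => cosetMap_smul _ _ (hsub ℓ) g (x.1 (s ℓ))

theorem invLimMap_basePt (s : ℕ → ℕ) (hs : Monotone s) (hsub : ∀ ℓ, G (s ℓ) ≤ H ℓ) :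
    invLimMap s hs hsub (basePt G hG) = basePt H hH :=
  rfl

theorem invLimMap_invLimMap {s t : ℕ → ℕ} (hs : Monotone s) (ht : Monotone t)
    (hGH : ∀ ℓ, G (s ℓ) ≤ H ℓ) (hHG : ∀ ℓ, H (t ℓ) ≤ G ℓ) (hst : ∀ ℓ, ℓ ≤ s (t ℓ))
    (x : InvLimSet G hG) : invLimMap t ht hHG (invLimMap (hH := hH) s hs hGH x) = x :=
  Subtype.ext <| funext fun ℓ =>
    (cosetMap_cosetMap (hGH (t ℓ)) (hHG ℓ) _).trans (cosetMap_val_of_le x (hst ℓ))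

def invLimHomeomorph {s t : ℕ → ℕ} (hs : Monotone s) (ht : Monotone t)
    (hGH : ∀ ℓ, G (s ℓ) ≤ H ℓ) (hHG : ∀ ℓ, H (t ℓ) ≤ G ℓ) (hst : ∀ ℓ, ℓ ≤ s (t ℓ))
    (hts : ∀ ℓ, ℓ ≤ t (s ℓ)) : InvLimSet G hG ≃ₜ InvLimSet H hH where
  toFun := invLimMap s hs hGH
  invFun := invLimMap t ht hHG
  left_inv := invLimMap_invLimMap hs ht hGH hHG hst
  right_inv := invLimMap_invLimMap ht hs hHG hGH hts
  continuous_toFun := continuous_invLimMap s hs hGH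
  continuous_invFun := continuous_invLimMap t ht hHG

end InverseLimit

theorem chain_equiv_iff_pointed_equivariant_homeo_general
    {Γ : Type*} [Group Γ]
    (G H : ℕ → Subgroup Γ)
    (hGdesc : ∀ ℓ, G (ℓ + 1) ≤ G ℓ) (hHdesc : ∀ ℓ, H (ℓ + 1) ≤ H ℓ) :
    ChainEquiv G H ↔
      ∃ τ : ↥(InvLimSet G hGdesc) ≃ₜ ↥(InvLimSet H hHdesc),
        (∀ (g : Γ) (x : ↥(InvLimSet G hGdesc)),
          τ (limSMul G hGdesc g x) = limSMul H hHdesc g (τ x)) ∧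
        τ (basePt G hGdesc) = basePt H hHdesc := by
  constructor
  · rintro ⟨l, j, hl, hj, hHG, hGH⟩
    have hs : Monotone fun ℓ => l (ℓ + 1) := fun _ _ h => hl.monotone (Nat.succ_le_succ h)
    have hGH' : ∀ ℓ, G (l (ℓ + 1)) ≤ H ℓ :=
      fun ℓ => (hGH ℓ).trans (antitone_nat_of_succ_le hHdesc hj.le_apply)
    have hHG' : ∀ ℓ, H (j ℓ) ≤ G ℓ :=
      fun ℓ => (hHG ℓ).trans (antitone_nat_of_succ_le hGdesc hl.le_apply)
    have hst : ∀ ℓ, ℓ ≤ l (j ℓ + 1) :=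
      fun ℓ => hj.le_apply.trans ((Nat.le_succ _).trans hl.le_apply)
    have hts : ∀ ℓ, ℓ ≤ j (l (ℓ + 1)) :=
      fun ℓ => (Nat.le_succ ℓ).trans (hl.le_apply.trans hj.le_apply)
    exact ⟨invLimHomeomorph hs hj.monotone hGH' hHG' hst hts, invLimMap_limSMul _ hs hGH',
      invLimMap_basePt _ hs hGH'⟩
  · rintro ⟨τ, hτ, hbase⟩
    refine chainEquiv_of_forall_exists_lt_le
      (exists_lt_le_of_continuous τ τ.continuous fun g => by rw [hτ, hbase])
      (exists_lt_le_of_continuous τ.symm τ.symm.continuous fun g => ?_)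
    rw [τ.symm_apply_eq, hτ, hbase]

/-- **Theorem 4.4(1).** Let `G₀` be a finitely generated group and `{G_ℓ}`, `{H_ℓ}` group
chains in `G₀` with `G_0 = H_0 = G₀`.  Then the chains are equivalent if and only if there
is a `G₀`-equivariant homeomorphism `τ : G_∞ → H_∞` with `τ((e G_ℓ)_ℓ) = (e H_ℓ)_ℓ`. -/
theorem chain_equiv_iff_pointed_equivariant_homeo
    {Γ : Type*} [Group Γ] (hfg : Group.FG Γ)
    (G H : ℕ → Subgroup Γ)
    (hGdesc : ∀ ℓ, G (ℓ + 1) ≤ G ℓ) (hHdesc : ∀ ℓ, H (ℓ + 1) ≤ H ℓ)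
    (hGfi : ∀ ℓ, (G ℓ).FiniteIndex) (hHfi : ∀ ℓ, (H ℓ).FiniteIndex)
    (hG0 : G 0 = ⊤) (hH0 : H 0 = ⊤) :
    ChainEquiv G H ↔
      ∃ τ : ↥(InvLimSet G hGdesc) ≃ₜ ↥(InvLimSet H hHdesc),
        (∀ (g : Γ) (x : ↥(InvLimSet G hGdesc)),
          τ (limSMul G hGdesc g x) = limSMul H hHdesc g (τ x)) ∧
        τ (basePt G hGdesc) = basePt H hHdesc :=
  chain_equiv_iff_pointed_equivariant_homeo_general G H hGdesc hHdesc
end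

section
/- Let {G_ℓ}_{ℓ≥0} be a group chain in a group G₀ with kernel K = ⋂_{ℓ≥0} G_ℓ, let X_∞ = lim← G₀/G_ℓ with basepoint x = (e G_ℓ)_ℓ and the left G₀-action, and for i ≥ 0 let U(x,i) = {(g_ℓ G_ℓ) ∈ X_∞ : g_ℓ G_ℓ = G_ℓ for all ℓ ≤ i} be the cylinder neighborhood of x. Then for every g ∈ K and i ≥ 0: g acts as the identity on U(x,i) if and only if h⁻¹ g h ∈ K for all h ∈ G_i. Consequently, g ∈ K has trivial germinal holonomy at x (i.e. acts as the identity on some cylinder neighborhood U(x,i)) if and only if there exists i_g ≥ 0 such that h⁻¹ g h ∈ K for all h ∈ G_{i_g}. -/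
variable {Γ : Type*} [Group Γ]

/-!
A point `y` of `U(x,i)` is, at every level `ℓ ≥ i`, the coset of a single element of `G_i`:
its coordinates are images of one another, so `y_ℓ = hG_ℓ` with `h` representing `y_{max ℓ i}`,
and `y_i = G_i` forces `h ∈ G_i`. Since `g` fixes `hG_ℓ` exactly when `h⁻¹gh ∈ G_ℓ`, the
condition on conjugates makes `g` fix `y`. Conversely, the constant sequences `(hG_ℓ)_ℓ` with
`h ∈ G_i` lie in `U(x,i)`, and `g` fixing them says `h⁻¹gh ∈ G_ℓ` for every `ℓ`.
-/

theorem QuotientGroup.mk_eq_mk_one_iff {H : Subgroup Γ} {h : Γ} :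
    (h : Γ ⧸ H) = ((1 : Γ) : Γ ⧸ H) ↔ h ∈ H := by
  rw [QuotientGroup.eq, mul_one, inv_mem_iff]

theorem QuotientGroup.smul_mk_eq_mk_iff {H : Subgroup Γ} {g h : Γ} :
    g • (h : Γ ⧸ H) = h ↔ h⁻¹ * g * h ∈ H := by
  rw [MulAction.Quotient.smul_coe, QuotientGroup.eq, ← inv_mem_iff]
  simp only [smul_eq_mul, mul_inv_rev, inv_inv, mul_assoc]

namespace InvLimSet

variable {G : ℕ → Subgroup Γ} {hG : ∀ ℓ, G (ℓ + 1) ≤ G ℓ}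

theorem apply_eq_mk_of_le (y : ↥(InvLimSet G hG)) {ℓ m : ℕ} (hℓm : ℓ ≤ m) {h : Γ}
    (hy : y.1 m = h) : y.1 ℓ = h := by
  induction m, hℓm using Nat.le_induction generalizing h with
  | base => exact hy
  | succ m _ ih => exact ih (by rw [← y.2 m, hy]; rfl)

variable (G hG)

def const (h : Γ) : ↥(InvLimSet G hG) :=
  ⟨fun _ => h, fun _ => rfl⟩

/-- The cylinder neighbourhood `U(x,i)` of the basepoint. -/
def cylinder (i : ℕ) : Set ↥(InvLimSet G hG) :=
  {y | ∀ ℓ, ℓ ≤ i → y.1 ℓ = ((1 : Γ) : Γ ⧸ G ℓ)}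

theorem limSMul_eq_self_iff (g : Γ) (y : ↥(InvLimSet G hG)) :
    limSMul G hG g y = y ↔ ∀ ℓ, g • y.1 ℓ = y.1 ℓ := by
  rw [Subtype.ext_iff, funext_iff]
  rfl

theorem const_mem_cylinder {i : ℕ} {h : Γ} (hh : h ∈ G i) : const G hG h ∈ cylinder G hG i :=
  fun _ hℓ => QuotientGroup.mk_eq_mk_one_iff.mpr ((antitone_nat_of_succ_le hG) hℓ hh)

theorem exists_mem_apply_eq_mk_of_mem_cylinder {i : ℕ} {y : ↥(InvLimSet G hG)}
    (hy : y ∈ cylinder G hG i) (ℓ : ℕ) : ∃ h ∈ G i, y.1 ℓ = h := by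
  obtain ⟨h, hh⟩ := QuotientGroup.mk_surjective (y.1 (max ℓ i))
  have hi : y.1 i = h := apply_eq_mk_of_le y (le_max_right ℓ i) hh.symm
  exact ⟨h, QuotientGroup.mk_eq_mk_one_iff.mp (hi.symm.trans (hy i le_rfl)),
    apply_eq_mk_of_le y (le_max_left ℓ i) hh.symm⟩

theorem fixes_cylinder_iff (g : Γ) (i : ℕ) :
    (∀ y ∈ cylinder G hG i, limSMul G hG g y = y) ↔
      ∀ h ∈ G i, h⁻¹ * g * h ∈ (⨅ ℓ : ℕ, G ℓ) := by
  simp only [limSMul_eq_self_iff, Subgroup.mem_iInf]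
  constructor
  · intro hfix h hh ℓ
    exact QuotientGroup.smul_mk_eq_mk_iff.mp (hfix _ (const_mem_cylinder G hG hh) ℓ)
  · intro hconj y hy ℓ
    obtain ⟨h, hh, hyℓ⟩ := exists_mem_apply_eq_mk_of_mem_cylinder G hG hy ℓ
    rw [hyℓ]
    exact QuotientGroup.smul_mk_eq_mk_iff.mpr (hconj h hh ℓ)

end InvLimSet

theorem identity_on_cylinder_iff_general
    {Γ : Type*} [Group Γ] (Gc : ℕ → Subgroup Γ)
    (hdesc : ∀ ℓ, Gc (ℓ + 1) ≤ Gc ℓ)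
    (g : Γ) :
    (∀ i : ℕ,
      ((∀ y : ↥(InvLimSet Gc hdesc),
          (∀ ℓ, ℓ ≤ i → y.1 ℓ = (QuotientGroup.mk 1 : Γ ⧸ Gc ℓ)) →
          limSMul Gc hdesc g y = y) ↔
        ∀ h ∈ Gc i, h⁻¹ * g * h ∈ (⨅ ℓ : ℕ, Gc ℓ))) ∧
    ((∃ i : ℕ, ∀ y : ↥(InvLimSet Gc hdesc),
          (∀ ℓ, ℓ ≤ i → y.1 ℓ = (QuotientGroup.mk 1 : Γ ⧸ Gc ℓ)) →
          limSMul Gc hdesc g y = y) ↔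
      ∃ i : ℕ, ∀ h ∈ Gc i, h⁻¹ * g * h ∈ (⨅ ℓ : ℕ, Gc ℓ)) :=
  ⟨InvLimSet.fixes_cylinder_iff Gc hdesc g,
    exists_congr (InvLimSet.fixes_cylinder_iff Gc hdesc g)⟩

/-- **Lemma 7.5.** Let `{G_ℓ}` be a group chain in `G₀` with kernel `K = ⋂_ℓ G_ℓ`, let
`X_∞ = lim← G₀/G_ℓ` with basepoint `x = (e G_ℓ)_ℓ`, and let
`U(x,i) = {(g_ℓ G_ℓ) ∈ X_∞ : g_ℓ G_ℓ = G_ℓ for ℓ ≤ i}`.  For `g ∈ K` and `i ≥ 0`: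
`g` acts as the identity on `U(x,i)` iff `h⁻¹ g h ∈ K` for all `h ∈ G_i`.
Consequently `g` has trivial germinal holonomy at `x` (acts as the identity on some
cylinder neighborhood) iff there is `i_g` with `h⁻¹ g h ∈ K` for all `h ∈ G_{i_g}`. -/
theorem identity_on_cylinder_iff
    {Γ : Type*} [Group Γ] (Gc : ℕ → Subgroup Γ)
    (hdesc : ∀ ℓ, Gc (ℓ + 1) ≤ Gc ℓ)
    (hfi : ∀ ℓ, (Gc ℓ).FiniteIndex) (hG0 : Gc 0 = ⊤)
    (g : Γ) (hg : g ∈ (⨅ ℓ : ℕ, Gc ℓ)) :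
    (∀ i : ℕ,
      ((∀ y : ↥(InvLimSet Gc hdesc),
          (∀ ℓ, ℓ ≤ i → y.1 ℓ = (QuotientGroup.mk 1 : Γ ⧸ Gc ℓ)) →
          limSMul Gc hdesc g y = y) ↔
        ∀ h ∈ Gc i, h⁻¹ * g * h ∈ (⨅ ℓ : ℕ, Gc ℓ))) ∧
    ((∃ i : ℕ, ∀ y : ↥(InvLimSet Gc hdesc),
          (∀ ℓ, ℓ ≤ i → y.1 ℓ = (QuotientGroup.mk 1 : Γ ⧸ Gc ℓ)) →
          limSMul Gc hdesc g y = y) ↔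
      ∃ i : ℕ, ∀ h ∈ Gc i, h⁻¹ * g * h ∈ (⨅ ℓ : ℕ, Gc ℓ)) :=
  identity_on_cylinder_iff_general Gc hdesc g
end
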